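/- arXiv:1104.3340 — 10 statements merged into one kernel-verified Lean document; each statement's English description precedes it below -/
import Mathlib

section
/- Let m ≥ 1. For every finite nonempty set A equipped with m surjective binary relations s₁^A,…,s_m^A, there exist a finite nonempty set B equipped with m surjective binary relations s₁^B,…,s_m^B and an epimorphism φ: B → A such that B satisfies: (i) every point of B is R-outgoing for exactly one R among s₁^B, (s₁^B)⁻¹, …, s_m^B, (s_m^B)⁻¹; and (ii) for each i, whenever sᵢ^B(x,y) holds, either x is sᵢ^B-outgoing or y is sᵢ^B-incoming. -/
/-- A binary relation `s` on `A` is surjective if every point has an outgoing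
and an incoming edge. -/
def SurjRel {A : Type*} (s : A → A → Prop) : Prop :=
  ∀ a : A, (∃ b, s a b) ∧ (∃ c, s c a)

/-- `x` is `R`-outgoing: more than one `z` with `R x z`, exactly one `y` with `R y x`. -/
def Outgoing {A : Type*} (R : A → A → Prop) (x : A) : Prop :=
  (∃ z z', R x z ∧ R x z' ∧ z ≠ z') ∧ (∃! y, R y x)

/-- `x` is `R`-incoming: more than one `y` with `R y x`, exactly one `z` with `R x z`. -/
def Incoming {A : Type*} (R : A → A → Prop) (x : A) : Prop :=
  (∃ y y', R y x ∧ R y' x ∧ y ≠ y') ∧ (∃! z, R x z)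

/-- The list of relations `s₁, s₁⁻¹, …, s_m, s_m⁻¹`, indexed by `Fin m × Bool`:
`(i, true)` gives `sᵢ` and `(i, false)` gives the inverse relation `sᵢ⁻¹`. -/
def relOf {A : Type*} {m : ℕ} (s : Fin m → A → A → Prop) :
    Fin m × Bool → A → A → Prop
  | (i, true) => s i
  | (i, false) => fun a b => s i b a

/-- An epimorphism between sets equipped with `m` binary relations. -/
def IsEpi {A B : Type*} {m : ℕ} (sA : Fin m → A → A → Prop)
    (sB : Fin m → B → B → Prop) (φ : B → A) : Prop :=
  Function.Surjective φ ∧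
    ∀ i x y, sA i x y ↔ ∃ x' y', φ x' = x ∧ φ y' = y ∧ sB i x' y'

namespace CoAux

variable {A : Type} {m : ℕ}

/-- The relation on `B = Fin m × A × Fin 2 × Bool`.  Here `w i a` is a chosen
in-neighbour of `a` for `sA i`, and `v i a` a chosen out-neighbour. -/
def rel (sA : Fin m → A → A → Prop) (w v : Fin m → A → A)
    (i : Fin m) (x y : Fin m × A × Fin 2 × Bool) : Prop :=
  (x.1 = i ∧ x.2.2.2 = true ∧ y.1 = i ∧ y.2.2.2 = false ∧ sA i x.2.1 y.2.1) ∨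
  (¬(y.1 = i ∧ y.2.2.2 = false) ∧ x = (i, w i y.2.1, 0, true)) ∨
  (¬(x.1 = i ∧ x.2.2.2 = true) ∧ y = (i, v i x.2.1, 0, false))

variable {sA : Fin m → A → A → Prop} {w v : Fin m → A → A}

/-- Every non-"incoming-class" vertex has a unique in-edge. -/
lemma uniq_in (i : Fin m) (y : Fin m × A × Fin 2 × Bool)
    (hy : ¬(y.1 = i ∧ y.2.2.2 = false)) : ∃! x, rel sA w v i x y := by
  refine ⟨(i, w i y.2.1, 0, true), Or.inr (Or.inl ⟨hy, rfl⟩), ?_⟩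
  rintro x (⟨_, _, h1, h2, _⟩ | ⟨_, rfl⟩ | ⟨_, h⟩)
  · exact absurd ⟨h1, h2⟩ hy
  · rfl
  · subst h; exact absurd ⟨rfl, rfl⟩ hy

/-- Every non-"outgoing-class" vertex has a unique out-edge. -/
lemma uniq_out (i : Fin m) (x : Fin m × A × Fin 2 × Bool)
    (hx : ¬(x.1 = i ∧ x.2.2.2 = true)) : ∃! y, rel sA w v i x y := by
  refine ⟨(i, v i x.2.1, 0, false), Or.inr (Or.inr ⟨hx, rfl⟩), ?_⟩
  rintro y (⟨h1, h2, _⟩ | ⟨_, h⟩ | ⟨_, rfl⟩)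
  · exact absurd ⟨h1, h2⟩ hx
  · subst h; exact absurd ⟨rfl, rfl⟩ hx
  · rfl

lemma two_out (hv : ∀ i a, sA i a (v i a)) (i : Fin m) (a : A) (k : Fin 2) :
    ∃ z z', rel sA w v i (i, a, k, true) z ∧ rel sA w v i (i, a, k, true) z' ∧ z ≠ z' := by
  refine ⟨(i, v i a, 0, false), (i, v i a, 1, false),
    Or.inl ⟨rfl, rfl, rfl, rfl, hv i a⟩, Or.inl ⟨rfl, rfl, rfl, rfl, hv i a⟩, ?_⟩
  simp

lemma two_in (hw : ∀ i a, sA i (w i a) a) (i : Fin m) (b : A) (k : Fin 2) :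
    ∃ z z', rel sA w v i z (i, b, k, false) ∧ rel sA w v i z' (i, b, k, false) ∧ z ≠ z' := by
  refine ⟨(i, w i b, 0, true), (i, w i b, 1, true),
    Or.inl ⟨rfl, rfl, rfl, rfl, hw i b⟩, Or.inl ⟨rfl, rfl, rfl, rfl, hw i b⟩, ?_⟩
  simp

lemma outgoing_iff (hw : ∀ i a, sA i (w i a) a) (hv : ∀ i a, sA i a (v i a))
    (i : Fin m) (x : Fin m × A × Fin 2 × Bool) :
    Outgoing (rel sA w v i) x ↔ (x.1 = i ∧ x.2.2.2 = true) := by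
  constructor
  · rintro ⟨⟨z, z', hz, hz', hne⟩, -⟩
    by_contra hx
    obtain ⟨u, -, hu⟩ := uniq_out (sA := sA) (w := w) (v := v) i x hx
    exact hne ((hu z hz).trans (hu z' hz').symm)
  · rintro ⟨h1, h2⟩
    obtain ⟨j, a, k, fl⟩ := x
    dsimp at h1 h2; subst h1; subst h2
    exact ⟨two_out hv _ a k, uniq_in _ _ (by simp)⟩

lemma incoming_iff (hw : ∀ i a, sA i (w i a) a) (hv : ∀ i a, sA i a (v i a))
    (i : Fin m) (x : Fin m × A × Fin 2 × Bool) :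
    Incoming (rel sA w v i) x ↔ (x.1 = i ∧ x.2.2.2 = false) := by
  constructor
  · rintro ⟨⟨z, z', hz, hz', hne⟩, -⟩
    by_contra hx
    obtain ⟨u, -, hu⟩ := uniq_in (sA := sA) (w := w) (v := v) i x hx
    exact hne ((hu z hz).trans (hu z' hz').symm)
  · rintro ⟨h1, h2⟩
    obtain ⟨j, b, k, fl⟩ := x
    dsimp at h1 h2; subst h1; subst h2
    exact ⟨two_in hw _ b k, uniq_out _ _ (by simp)⟩

end CoAux

/-- The structures satisfying conditions (i) and (ii) of Theorem 4.2 are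
coinitial: every finite nonempty set with `m` surjective relations admits an
epimorphism from such a structure. -/
theorem coinitial {m : ℕ} (hm : 1 ≤ m) {A : Type} [Fintype A] [Nonempty A]
    (sA : Fin m → A → A → Prop) (hA : ∀ i, SurjRel (sA i)) :
    ∃ (B : Type) (_ : Fintype B) (_ : Nonempty B)
      (sB : Fin m → B → B → Prop) (φ : B → A),
      (∀ i, SurjRel (sB i)) ∧ IsEpi sA sB φ ∧
      (∀ x : B, ∃! p : Fin m × Bool, Outgoing (relOf sB p) x) ∧
      (∀ i x y, sB i x y → Outgoing (sB i) x ∨ Incoming (sB i) y) := by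
  classical
  have i0 : Fin m := ⟨0, hm⟩
  set w : Fin m → A → A := fun i a => ((hA i a).2).choose with hw_def
  have hw : ∀ i a, sA i (w i a) a := fun i a => ((hA i a).2).choose_spec
  set v : Fin m → A → A := fun i a => ((hA i a).1).choose with hv_def
  have hv : ∀ i a, sA i a (v i a) := fun i a => ((hA i a).1).choose_spec
  refine ⟨Fin m × A × Fin 2 × Bool, inferInstance,
    ⟨⟨i0, Classical.arbitrary A, 0, true⟩⟩,
    CoAux.rel sA w v, fun x => x.2.1, ?_, ?_, ?_, ?_⟩
  · -- SurjRel
    intro i x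
    constructor
    · by_cases hx : x.1 = i ∧ x.2.2.2 = true
      · exact ⟨(i, v i x.2.1, 0, false),
          Or.inl ⟨hx.1, hx.2, rfl, rfl, hv i x.2.1⟩⟩
      · exact ⟨(i, v i x.2.1, 0, false), Or.inr (Or.inr ⟨hx, rfl⟩)⟩
    · by_cases hx : x.1 = i ∧ x.2.2.2 = false
      · exact ⟨(i, w i x.2.1, 0, true),
          Or.inl ⟨rfl, rfl, hx.1, hx.2, hw i x.2.1⟩⟩
      · exact ⟨(i, w i x.2.1, 0, true), Or.inr (Or.inl ⟨hx, rfl⟩)⟩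
  · -- IsEpi
    refine ⟨fun a => ⟨(i0, a, 0, true), rfl⟩, fun i a b => ?_⟩
    constructor
    · intro h
      exact ⟨(i, a, 0, true), (i, b, 0, false), rfl, rfl,
        Or.inl ⟨rfl, rfl, rfl, rfl, h⟩⟩
    · rintro ⟨x, y, rfl, rfl, (⟨_, _, _, _, h⟩ | ⟨_, h⟩ | ⟨_, h⟩)⟩
      · exact h
      · subst h; exact hw i y.2.1
      · subst h; exact hv i x.2.1
  · -- exactly one outgoing
    intro x
    refine ⟨(x.1, x.2.2.2), ?_, ?_⟩
    · cases hfl : x.2.2.2 with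
      | true =>
          show Outgoing (CoAux.rel sA w v x.1) x
          exact (CoAux.outgoing_iff hw hv x.1 x).2 ⟨rfl, hfl⟩
      | false =>
          show Outgoing (fun a b => CoAux.rel sA w v x.1 b a) x
          have : Incoming (CoAux.rel sA w v x.1) x :=
            (CoAux.incoming_iff hw hv x.1 x).2 ⟨rfl, hfl⟩
          exact ⟨this.1, this.2⟩
    · rintro ⟨i, (tf | tf)⟩ hp
      · -- tf = false : outgoing for inverse = incoming
        have : Incoming (CoAux.rel sA w v i) x := ⟨hp.1, hp.2⟩
        have h := (CoAux.incoming_iff hw hv i x).1 this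
        simp [← h.1, h.2]
      · have h := (CoAux.outgoing_iff hw hv i x).1 hp
        simp [← h.1, h.2]
  · -- condition (ii)
    rintro i x y (⟨h1, h2, _⟩ | ⟨_, h⟩ | ⟨_, h⟩)
    · exact Or.inl ((CoAux.outgoing_iff hw hv i x).2 ⟨h1, h2⟩)
    · subst h
      exact Or.inl ((CoAux.outgoing_iff hw hv i _).2 ⟨rfl, rfl⟩)
    · subst h
      exact Or.inr ((CoAux.incoming_iff hw hv i _).2 ⟨rfl, rfl⟩)
end

section
/- The class of finite nonempty sets equipped with m surjective binary relations has the joint projection property: for any finite nonempty sets A and B, each equipped with m surjective binary relations, there exist a finite nonempty set C equipped with m surjective binary relations and epimorphisms from C onto A and from C onto B. (In fact C = A × B with the product relations sᵢ^C((a,b),(a',b')) ⟺ sᵢ^A(a,a') ∧ sᵢ^B(b,b'), together with the two coordinate projections, works.) -/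
/-- The joint projection property for finite nonempty sets with `m` surjective
relations; in fact the product `A × B` with the product relations and the two
coordinate projections works. -/
theorem joint_projection_property {m : ℕ} {A B : Type}
    [Fintype A] [Nonempty A] [Fintype B] [Nonempty B]
    (sA : Fin m → A → A → Prop) (sB : Fin m → B → B → Prop)
    (hA : ∀ i, SurjRel (sA i)) (hB : ∀ i, SurjRel (sB i)) :
    (∃ (C : Type) (_ : Fintype C) (_ : Nonempty C)
      (sC : Fin m → C → C → Prop) (φA : C → A) (φB : C → B),
      (∀ i, SurjRel (sC i)) ∧ IsEpi sA sC φA ∧ IsEpi sB sC φB) ∧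
    ((∀ i, SurjRel (fun p q : A × B => sA i p.1 q.1 ∧ sB i p.2 q.2)) ∧
      IsEpi sA (fun i (p q : A × B) => sA i p.1 q.1 ∧ sB i p.2 q.2) Prod.fst ∧
      IsEpi sB (fun i (p q : A × B) => sA i p.1 q.1 ∧ sB i p.2 q.2) Prod.snd) := by

  have key : (∀ i, SurjRel (fun p q : A × B => sA i p.1 q.1 ∧ sB i p.2 q.2)) ∧
      IsEpi sA (fun i (p q : A × B) => sA i p.1 q.1 ∧ sB i p.2 q.2) Prod.fst ∧
      IsEpi sB (fun i (p q : A × B) => sA i p.1 q.1 ∧ sB i p.2 q.2) Prod.snd := by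
    refine ⟨?_, ⟨?_, ?_⟩, ⟨?_, ?_⟩⟩
    · intro i p
      obtain ⟨⟨a1, ha1⟩, ⟨a2, ha2⟩⟩ := hA i p.1
      obtain ⟨⟨b1, hb1⟩, ⟨b2, hb2⟩⟩ := hB i p.2
      exact ⟨⟨(a1, b1), ha1, hb1⟩, ⟨(a2, b2), ha2, hb2⟩⟩
    · intro a
      obtain ⟨b⟩ := (inferInstance : Nonempty B)
      exact ⟨(a, b), rfl⟩
    · intro i x y
      constructor
      · intro hxy
        obtain ⟨b0⟩ := (inferInstance : Nonempty B)
        obtain ⟨⟨c, hc⟩, _⟩ := hB i b0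
        exact ⟨(x, b0), (y, c), rfl, rfl, hxy, hc⟩
      · rintro ⟨x', y', rfl, rfl, h, -⟩
        exact h
    · intro b
      obtain ⟨a⟩ := (inferInstance : Nonempty A)
      exact ⟨(a, b), rfl⟩
    · intro i x y
      constructor
      · intro hxy
        obtain ⟨a0⟩ := (inferInstance : Nonempty A)
        obtain ⟨⟨c, hc⟩, _⟩ := hA i a0
        exact ⟨(a0, x), (c, y), rfl, rfl, hc, hxy⟩
      · rintro ⟨x', y', rfl, rfl, -, h⟩
        exact h
  exact ⟨⟨A × B, inferInstance, inferInstance,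
    fun i p q => sA i p.1 q.1 ∧ sB i p.2 q.2, Prod.fst, Prod.snd, key.1, key.2.1, key.2.2⟩, key⟩
end

section
/- For every finite nonempty set A equipped with a surjective binary relation s^A, there exist a spiral structure M (a finite disjoint union of spirals) and an epimorphism from M onto A. In other words, the class of spiral structures is coinitial in the class of all finite nonempty sets with a surjective binary relation. -/
/-- Data of a spiral: the set `{1, …, n}` with distinguished left node `x` and
right node `y` satisfying `1 < x < y < n`. -/
structure SpiralData where
  n : ℕ
  x : ℕ
  y : ℕ
  one_lt_x : 1 < x
  x_lt_y : x < y
  y_lt_n : y < n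

/-- The spiral relation, on the underlying natural numbers: the pairs `(i, i+1)`
for `1 ≤ i ≤ n - 1`, together with `(x, 1)` and `(n, y)`. -/
def spiralRelNat (S : SpiralData) (a b : ℕ) : Prop :=
  (1 ≤ a ∧ a < S.n ∧ b = a + 1) ∨ (a = S.x ∧ b = 1) ∨ (a = S.n ∧ b = S.y)

/-- The underlying set `{1, …, n}` of a spiral. -/
def SpiralCarrier (S : SpiralData) : Type := {i : ℕ // 1 ≤ i ∧ i ≤ S.n}

/-- The spiral relation on the carrier. -/
def spiralRel (S : SpiralData) (a b : SpiralCarrier S) : Prop :=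
  spiralRelNat S a.1 b.1

/-- The left node of a spiral, as an element of its carrier. -/
def leftNode (S : SpiralData) : SpiralCarrier S :=
  ⟨S.x, by have := S.one_lt_x; have := S.x_lt_y; have := S.y_lt_n; omega⟩

/-- The right node of a spiral, as an element of its carrier. -/
def rightNode (S : SpiralData) : SpiralCarrier S :=
  ⟨S.y, by have := S.one_lt_x; have := S.x_lt_y; have := S.y_lt_n; omega⟩

/-- The underlying set of a spiral structure: the disjoint union of the
carriers of the spirals `S 0, …, S (k-1)`. -/
def SpiralStructCarrier {k : ℕ} (S : Fin k → SpiralData) : Type :=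
  Σ j : Fin k, SpiralCarrier (S j)

/-- The relation of a spiral structure: the union of the spiral relations. -/
def spiralStructRel {k : ℕ} (S : Fin k → SpiralData)
    (a b : SpiralStructCarrier S) : Prop :=
  a.1 = b.1 ∧ spiralRelNat (S a.1) a.2.1 b.2.1

/-- A map `f` is relation preserving if `rA a b` implies `rB (f a) (f b)`. -/
def RelPres {A B : Type*} (rA : A → A → Prop) (rB : B → B → Prop)
    (f : A → B) : Prop :=
  ∀ a b, rA a b → rB (f a) (f b)

/-- An epimorphism between sets each equipped with a binary relation. -/
def IsEpi1 {A B : Type*} (sA : A → A → Prop) (sB : B → B → Prop)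
    (φ : B → A) : Prop :=
  Function.Surjective φ ∧
    ∀ x y, sA x y ↔ ∃ x' y', φ x' = x ∧ φ y' = y ∧ sB x' y'

/-!
Every edge `a → b` of `s^A` lies on a spiral mapped homomorphically into `A`: walk backwards
from `a` along chosen predecessors and forwards from `b` along chosen successors. By finiteness
both walks run into a cycle; closing the backward cycle by the edge `x → 1` and the forward one
by `n → y` turns the concatenated walk into a spiral. Doubling the periods of the cycles makes
them at least `2`, which is what `1 < x` and `y < n` require. The disjoint union of these
spirals, one per edge, then maps onto `A`, and its image relation is exactly `s^A`.
-/

open Function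

lemma exists_isPeriodicPt_iterate {α : Type*} [Finite α] (g : α → α) (c : α) :
    ∃ i d, 2 ≤ d ∧ IsPeriodicPt g d (g^[i] c) := by
  obtain ⟨m, n, hne, heq⟩ := Finite.exists_ne_map_eq_of_infinite (fun k : ℕ => g^[k] c)
  wlog hlt : m < n generalizing m n
  · exact this n m hne.symm heq.symm (by omega)
  have hper : IsPeriodicPt g (n - m) (g^[m] c) := by
    change g^[n - m] (g^[m] c) = g^[m] c
    rw [← iterate_add_apply, Nat.sub_add_cancel hlt.le]
    exact heq.symm
  exact ⟨m, (n - m) * 2, by omega, hper.mul_const 2⟩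

section Spirals

variable {A : Type*} {sA : A → A → Prop}

lemma relPres_spiralRel_of_chain {S : SpiralData} {w : ℕ → A}
    (hstep : ∀ t, 1 ≤ t → t < S.n → sA (w t) (w (t + 1)))
    (hleft : sA (w S.x) (w 1)) (hright : sA (w S.n) (w S.y)) :
    RelPres (spiralRel S) sA (fun t => w t.1) := by
  rintro ⟨t, _⟩ ⟨u, _⟩ (⟨ht, htn, rfl⟩ | ⟨rfl, rfl⟩ | ⟨rfl, rfl⟩)
  · exact hstep t ht htn
  · exact hleft
  · exact hright

def backForthWalk (pred succ : A → A) (a b : A) (m t : ℕ) : A :=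
  if t ≤ m then pred^[m - t] a else succ^[t - (m + 1)] b

variable {pred succ : A → A} {a b : A}

lemma backForthWalk_of_le {m t : ℕ} (h : t ≤ m) :
    backForthWalk pred succ a b m t = pred^[m - t] a :=
  if_pos h

lemma backForthWalk_of_lt {m t : ℕ} (h : m < t) :
    backForthWalk pred succ a b m t = succ^[t - (m + 1)] b :=
  if_neg (Nat.not_le.mpr h)

lemma backForthWalk_step (hpred : ∀ c, sA (pred c) c) (hsucc : ∀ c, sA c (succ c))
    (hab : sA a b) (m t : ℕ) :
    sA (backForthWalk pred succ a b m t) (backForthWalk pred succ a b m (t + 1)) := by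
  rcases Nat.lt_trichotomy (t + 1) (m + 1) with h | h | h
  · rw [backForthWalk_of_le (by omega), backForthWalk_of_le (by omega),
      show m - t = (m - (t + 1)) + 1 by omega, iterate_succ_apply']
    exact hpred _
  · obtain rfl : t = m := by omega
    rw [backForthWalk_of_le le_rfl, backForthWalk_of_lt (by omega)]
    simpa using hab
  · rw [backForthWalk_of_lt (by omega), backForthWalk_of_lt (by omega),
      show t + 1 - (m + 1) = (t - (m + 1)) + 1 by omega, iterate_succ_apply']
    exact hsucc _

lemma exists_spiral_through_edge [Finite A] (hA : SurjRel sA) (hab : sA a b) :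
    ∃ (S : SpiralData) (f : SpiralCarrier S → A) (t u : SpiralCarrier S),
      RelPres (spiralRel S) sA f ∧ spiralRel S t u ∧ f t = a ∧ f u = b := by
  choose succ hsucc using fun c => (hA c).1
  choose pred hpred using fun c => (hA c).2
  obtain ⟨I, D, hD, hI⟩ := exists_isPeriodicPt_iterate pred a
  obtain ⟨P, Q, hQ, hP⟩ := exists_isPeriodicPt_iterate succ b
  -- `a` sits at position `m = I + D + 1`, `b` at `m + 1`; `x = D` and `y = m + P + 2`
  -- carry the labels `pred (pred^[I] a)` and `succ (succ^[P] b)`.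
  obtain ⟨S, hn, hx, hy⟩ : ∃ S : SpiralData,
      S.n = I + D + 1 + 1 + P + Q ∧ S.x = D ∧ S.y = I + D + 1 + P + 2 :=
    ⟨⟨_, _, _, by omega, by omega, by omega⟩, rfl, rfl, rfl⟩
  let w := backForthWalk pred succ a b (I + D + 1)
  have hleft : sA (w S.x) (w 1) := by
    rw [hx]
    dsimp only [w]
    rw [backForthWalk_of_le (by omega), backForthWalk_of_le (by omega),
      show I + D + 1 - 1 = D + I by omega, iterate_add_apply, hI.eq,
      show I + D + 1 - D = I + 1 by omega, iterate_succ_apply']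
    exact hpred _
  have hright : sA (w S.n) (w S.y) := by
    rw [hn, hy]
    dsimp only [w]
    rw [backForthWalk_of_lt (by omega), backForthWalk_of_lt (by omega),
      show I + D + 1 + 1 + P + Q - (I + D + 1 + 1) = Q + P by omega, iterate_add_apply, hP.eq,
      show I + D + 1 + P + 2 - (I + D + 1 + 1) = P + 1 by omega, iterate_succ_apply']
    exact hsucc _
  refine ⟨S, fun t => w t.1, ⟨I + D + 1, by omega, by omega⟩, ⟨I + D + 1 + 1, by omega, by omega⟩,
    relPres_spiralRel_of_chain (fun t _ _ => backForthWalk_step hpred hsucc hab _ t) hleft hright,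
    ?_, ?_, ?_⟩
  · change spiralRelNat S (I + D + 1) (I + D + 1 + 1)
    exact Or.inl ⟨by omega, by omega, rfl⟩
  · simp [w, backForthWalk_of_le]
  · simp [w, backForthWalk_of_lt]

lemma exists_spiralStruct_epi {ι : Type*} [Finite ι] (S : ι → SpiralData)
    (f : ∀ i, SpiralCarrier (S i) → A) (hf : ∀ i, RelPres (spiralRel (S i)) sA (f i))
    (hsurj : ∀ a, ∃ i t, f i t = a)
    (hcover : ∀ a b, sA a b → ∃ i t u, spiralRel (S i) t u ∧ f i t = a ∧ f i u = b) :
    ∃ (k : ℕ) (S' : Fin k → SpiralData) (φ : SpiralStructCarrier S' → A),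
      IsEpi1 sA (spiralStructRel S') φ := by
  let e := (Finite.equivFin ι).symm
  refine ⟨Nat.card ι, fun j => S (e j), fun z => f (e z.1) z.2, fun a => ?_, fun a b => ⟨?_, ?_⟩⟩
  · obtain ⟨i, t, rfl⟩ := hsurj a
    obtain ⟨j, rfl⟩ := e.surjective i
    exact ⟨⟨j, t⟩, rfl⟩
  · intro hab
    obtain ⟨i, t, u, htu, rfl, rfl⟩ := hcover a b hab
    obtain ⟨j, rfl⟩ := e.surjective i
    exact ⟨⟨j, t⟩, ⟨j, u⟩, rfl, rfl, rfl, htu⟩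
  · rintro ⟨⟨j, t⟩, ⟨j', u⟩, rfl, rfl, hjj', htu⟩
    obtain rfl : j = j' := hjj'
    exact hf _ t u htu

end Spirals

theorem spiral_structures_coinitial_general {A : Type} [Fintype A]
    (sA : A → A → Prop) (hA : SurjRel sA) :
    ∃ (k : ℕ) (S : Fin k → SpiralData) (φ : SpiralStructCarrier S → A),
      IsEpi1 sA (spiralStructRel S) φ := by
  choose S f t u hf htu ht hu using
    fun e : {p : A × A // sA p.1 p.2} => exists_spiral_through_edge hA e.2
  refine exists_spiralStruct_epi S f hf (fun a => ?_)
    fun a b hab => ⟨⟨(a, b), hab⟩, t _, u _, htu _, ht _, hu _⟩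
  obtain ⟨b, hab⟩ := (hA a).1
  exact ⟨⟨(a, b), hab⟩, t _, ht _⟩

/-- Spiral structures are coinitial in the class of finite nonempty sets with a
surjective binary relation. -/
theorem spiral_structures_coinitial {A : Type} [Fintype A] [Nonempty A]
    (sA : A → A → Prop) (hA : SurjRel sA) :
    ∃ (k : ℕ) (S : Fin k → SpiralData) (φ : SpiralStructCarrier S → A),
      IsEpi1 sA (spiralStructRel S) φ :=
  spiral_structures_coinitial_general sA hA
end

section
/- Let K, L, M be spirals, let f₁: L → K be a relation preserving map, and let f₂: M → K be a relation preserving map that is onto K. Then there exist a spiral N, a relation preserving map f₃: N → L that is onto L, and a relation preserving map f₄: N → M such that f₁ ∘ f₃ = f₂ ∘ f₄. -/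
set_option maxHeartbeats 1000000


namespace Spiral

lemma bounds (S : SpiralData) : 1 < S.x ∧ S.x < S.y ∧ S.y < S.n :=
  ⟨S.one_lt_x, S.x_lt_y, S.y_lt_n⟩

lemma rel_mem {S : SpiralData} {a b : ℕ} (h : spiralRelNat S a b) :
    1 ≤ a ∧ a ≤ S.n ∧ 1 ≤ b ∧ b ≤ S.n := by
  obtain ⟨_,_,_⟩ := bounds S
  rcases h with ⟨h1,h2,h3⟩|⟨h1,h2⟩|⟨h1,h2⟩ <;> omega

section K
variable (K : SpiralData)

/-- rotation of the left cycle `[1, K.x]` -/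
def R1 (a t : ℕ) : ℕ := (a - 1 + t) % K.x + 1

/-- length of the right cycle -/
def c2 : ℕ := K.n - K.y + 1

/-- rotation of the right cycle `[K.y, K.n]` -/
def R2 (a t : ℕ) : ℕ := K.y + (a - K.y + t) % (c2 K)

variable {K}

lemma c2_pos : 0 < c2 K := by have := bounds K; unfold c2; omega

lemma R1_zero {a : ℕ} (h1 : 1 ≤ a) (h2 : a ≤ K.x) : R1 K a 0 = a := by
  have := bounds K
  unfold R1
  rw [Nat.add_zero, Nat.mod_eq_of_lt (by omega)]
  omega

lemma R1_mem (a t : ℕ) : 1 ≤ R1 K a t ∧ R1 K a t ≤ K.x := by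
  have := bounds K
  have : (a - 1 + t) % K.x < K.x := Nat.mod_lt _ (by omega)
  unfold R1; omega

lemma R1_succ (a t : ℕ) :
    R1 K a (t + 1) = if R1 K a t = K.x then 1 else R1 K a t + 1 := by
  have hx := bounds K
  unfold R1
  have h1 : (a - 1 + (t + 1)) % K.x = ((a - 1 + t) % K.x + 1) % K.x := by
    have h := ((Nat.mod_modEq (a - 1 + t) K.x).add_right 1).symm
    exact h
  set v := (a - 1 + t) % K.x with hv
  have hvlt : v < K.x := Nat.mod_lt _ (by omega)
  rw [h1]
  by_cases h : v + 1 = K.x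
  · rw [if_pos (by omega), h, Nat.mod_self]
  · rw [if_neg (by omega), Nat.mod_eq_of_lt (by omega)]

lemma R1_add (a s t : ℕ) : R1 K (R1 K a s) t = R1 K a (s + t) := by
  unfold R1
  rw [Nat.add_sub_cancel, Nat.mod_add_mod, Nat.add_assoc]

lemma R1_modeq {s s' : ℕ} (a : ℕ) (h : s ≡ s' [MOD K.x]) :
    R1 K a s = R1 K a s' := by
  unfold R1
  have := (Nat.ModEq.refl (a - 1)).add h
  rw [this]

lemma R1_inj {a s s' : ℕ} (h : R1 K a s = R1 K a s') : s ≡ s' [MOD K.x] := by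
  unfold R1 at h
  have h2 : (a - 1 + s) % K.x = (a - 1 + s') % K.x := by omega
  exact Nat.ModEq.add_left_cancel' (a - 1) h2

lemma R1_surj {a b : ℕ} (ha1 : 1 ≤ a) (ha2 : a ≤ K.x) (hb1 : 1 ≤ b)
    (hb2 : b ≤ K.x) : ∃ s, 1 ≤ s ∧ s ≤ K.x ∧ R1 K a s = b := by
  have hx := bounds K
  have key : R1 K a (K.x + b - a) = b := by
    unfold R1
    rw [show a - 1 + (K.x + b - a) = K.x + (b - 1) by omega,
      Nat.add_mod_left, Nat.mod_eq_of_lt (by omega)]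
    omega
  set s' := K.x + b - a with hs'
  have hs'1 : 1 ≤ s' := by omega
  refine ⟨(s' - 1) % K.x + 1, by omega, by
    have := Nat.mod_lt (s' - 1) (y := K.x) (by omega); omega, ?_⟩
  rw [← key]
  apply R1_modeq
  have h3 : (s' - 1) % K.x ≡ s' - 1 [MOD K.x] := Nat.mod_modEq _ _
  have h4 := h3.add_right 1
  rwa [show s' - 1 + 1 = s' by omega] at h4

lemma R2_zero {a : ℕ} (h1 : K.y ≤ a) (h2 : a ≤ K.n) : R2 K a 0 = a := by
  have := bounds K
  unfold R2 c2
  rw [Nat.add_zero, Nat.mod_eq_of_lt (by omega)]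
  omega

lemma R2_mem (a t : ℕ) : K.y ≤ R2 K a t ∧ R2 K a t ≤ K.n := by
  have h := bounds K
  have : (a - K.y + t) % c2 K < c2 K := Nat.mod_lt _ c2_pos
  unfold R2 at *; unfold c2 at *; omega

lemma R2_succ (a t : ℕ) :
    R2 K a (t + 1) = if R2 K a t = K.n then K.y else R2 K a t + 1 := by
  have hx := bounds K
  have hc := c2_pos (K := K)
  unfold R2
  have h1 : (a - K.y + (t + 1)) % c2 K = ((a - K.y + t) % c2 K + 1) % c2 K := by
    have h := ((Nat.mod_modEq (a - K.y + t) (c2 K)).add_right 1).symm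
    exact h
  set v := (a - K.y + t) % c2 K with hv
  have hvlt : v < c2 K := Nat.mod_lt _ hc
  rw [h1]
  have hc2 : c2 K = K.n - K.y + 1 := rfl
  by_cases h : v + 1 = c2 K
  · rw [if_pos (by omega), h, Nat.mod_self]
    omega
  · rw [if_neg (by omega), Nat.mod_eq_of_lt (by omega)]
    omega

lemma R2_add (a s t : ℕ) : R2 K (R2 K a s) t = R2 K a (s + t) := by
  unfold R2
  rw [Nat.add_sub_cancel_left, Nat.mod_add_mod, Nat.add_assoc]

lemma R2_modeq {s s' : ℕ} (a : ℕ) (h : s ≡ s' [MOD c2 K]) :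
    R2 K a s = R2 K a s' := by
  unfold R2
  have := (Nat.ModEq.refl (a - K.y)).add h
  rw [this]

lemma R2_surj {a b : ℕ} (ha1 : K.y ≤ a) (ha2 : a ≤ K.n) (hb1 : K.y ≤ b)
    (hb2 : b ≤ K.n) : ∃ s, 1 ≤ s ∧ s ≤ c2 K ∧ R2 K a s = b := by
  have hx := bounds K
  have hc : c2 K = K.n - K.y + 1 := rfl
  have key : R2 K a (c2 K + b - a) = b := by
    unfold R2
    rw [show a - K.y + (c2 K + b - a) = c2 K + (b - K.y) by omega,
      Nat.add_mod_left, Nat.mod_eq_of_lt (by omega)]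
    omega
  set s' := c2 K + b - a with hs'
  have hs'1 : 1 ≤ s' := by omega
  refine ⟨(s' - 1) % c2 K + 1, by omega, by
    have := Nat.mod_lt (s' - 1) (y := c2 K) (by omega); omega, ?_⟩
  rw [← key]
  apply R2_modeq
  have h3 : (s' - 1) % c2 K ≡ s' - 1 [MOD c2 K] := Nat.mod_modEq _ _
  have h4 := h3.add_right 1
  rwa [show s' - 1 + 1 = s' by omega] at h4

/-! Step lemmas for the relation of `K`. -/

lemma exitCK1 {a b : ℕ} (h : spiralRelNat K a b) (ha : a ≤ K.x)
    (hb : K.x < b) : a = K.x ∧ b = K.x + 1 := by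
  have := bounds K
  rcases h with ⟨h1,h2,h3⟩|⟨h1,h2⟩|⟨h1,h2⟩ <;> omega

lemma intoCK1 {a b : ℕ} (h : spiralRelNat K a b) (hb : b ≤ K.x) : a ≤ K.x := by
  have := bounds K
  rcases h with ⟨h1,h2,h3⟩|⟨h1,h2⟩|⟨h1,h2⟩ <;> omega

lemma stepCK1 {a b : ℕ} (h : spiralRelNat K a b) (ha : a ≤ K.x)
    (hb : b ≤ K.x) : b = if a = K.x then 1 else a + 1 := by
  have := bounds K
  by_cases hax : a = K.x
  · rw [if_pos hax]
    rcases h with ⟨h1,h2,h3⟩|⟨h1,h2⟩|⟨h1,h2⟩ <;> omega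
  · rw [if_neg hax]
    rcases h with ⟨h1,h2,h3⟩|⟨h1,h2⟩|⟨h1,h2⟩ <;> omega

lemma CK2_closed {a b : ℕ} (h : spiralRelNat K a b) (ha : K.y ≤ a) :
    K.y ≤ b ∧ b ≤ K.n := by
  have := bounds K
  rcases h with ⟨h1,h2,h3⟩|⟨h1,h2⟩|⟨h1,h2⟩ <;> omega

lemma stepCK2 {a b : ℕ} (h : spiralRelNat K a b) (ha : K.y ≤ a) :
    b = if a = K.n then K.y else a + 1 := by
  have := bounds K
  by_cases hax : a = K.n
  · rw [if_pos hax]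
    rcases h with ⟨h1,h2,h3⟩|⟨h1,h2⟩|⟨h1,h2⟩ <;> omega
  · rw [if_neg hax]
    rcases h with ⟨h1,h2,h3⟩|⟨h1,h2⟩|⟨h1,h2⟩ <;> omega

lemma middle_step {a b : ℕ} (h : spiralRelNat K a b) (ha1 : K.x < a)
    (ha2 : a < K.y) : b = a + 1 := by
  have := bounds K
  rcases h with ⟨h1,h2,h3⟩|⟨h1,h2⟩|⟨h1,h2⟩ <;> omega

/-! Determinism of walks in `K`. -/

lemma CK1_det {G : ℕ → ℕ} (hG : ∀ t, spiralRelNat K (G t) (G (t + 1)))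
    {T : ℕ} (hmem : ∀ s, s ≤ T → 1 ≤ G s ∧ G s ≤ K.x) :
    ∀ s, s ≤ T → G s = R1 K (G 0) s := by
  intro s hs
  induction s with
  | zero => exact (R1_zero (hmem 0 (by omega)).1 (hmem 0 (by omega)).2).symm
  | succ n ih =>
    have hn := ih (by omega)
    rw [R1_succ, ← hn]
    exact stepCK1 (hG n) (hmem n (by omega)).2 (hmem (n+1) hs).2

lemma CK2_det {G : ℕ → ℕ} (hG : ∀ t, spiralRelNat K (G t) (G (t + 1)))
    {T : ℕ} (hmem : ∀ s, s ≤ T → K.y ≤ G s ∧ G s ≤ K.n) :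
    ∀ s, s ≤ T → G s = R2 K (G 0) s := by
  intro s hs
  induction s with
  | zero => exact (R2_zero (hmem 0 (by omega)).1 (hmem 0 (by omega)).2).symm
  | succ n ih =>
    have hn := ih (by omega)
    rw [R2_succ, ← hn]
    exact stepCK2 (hG n) (hmem n (by omega)).1

/-- the forced walk starting at `K.x + 1` -/
def Phi (u : ℕ) : ℕ :=
  if K.x + 1 + u < K.y then K.x + 1 + u else R2 K K.y (u - (K.y - K.x - 1))

lemma Phi_zero : Phi (K := K) 0 = K.x + 1 := by
  have := bounds K
  unfold Phi
  by_cases h : K.x + 1 + 0 < K.y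
  · rw [if_pos h]
  · rw [if_neg h]
    have hy : K.y = K.x + 1 := by omega
    rw [show (0 : ℕ) - (K.y - K.x - 1) = 0 by omega, R2_zero (by omega) (by omega)]
    omega

lemma Phi_step {u b : ℕ} (h : spiralRelNat K (Phi (K := K) u) b) :
    b = Phi (K := K) (u + 1) := by
  have hb := bounds K
  unfold Phi at *
  by_cases h1 : K.x + 1 + u < K.y
  · rw [if_pos h1] at h
    have hstep := middle_step h (by omega) h1
    by_cases h2 : K.x + 1 + (u + 1) < K.y
    · rw [if_pos h2]; omega
    · rw [if_neg h2]
      rw [show u + 1 - (K.y - K.x - 1) = 0 by omega, R2_zero (by omega) (by omega)]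
      omega
  · rw [if_neg h1] at h
    rw [if_neg (by omega)]
    have hmem := R2_mem (K := K) K.y (u - (K.y - K.x - 1))
    have hstep := stepCK2 h hmem.1
    rw [show u + 1 - (K.y - K.x - 1) = (u - (K.y - K.x - 1)) + 1 by omega, R2_succ]
    omega

lemma Phi_det {G : ℕ → ℕ} (hG : ∀ t, spiralRelNat K (G t) (G (t + 1)))
    (h0 : G 0 = K.x + 1) : ∀ u, G u = Phi (K := K) u := by
  intro u
  induction u with
  | zero => rw [h0, Phi_zero]
  | succ n ih =>
    have h := hG n
    rw [ih] at h
    exact Phi_step h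

/-- profile of a walk that stays in the left cycle up to time `C` and then
crosses -/
lemma profile {G : ℕ → ℕ} (hG : ∀ t, spiralRelNat K (G t) (G (t + 1)))
    {C : ℕ} (h1 : ∀ s, s ≤ C → 1 ≤ G s ∧ G s ≤ K.x) (h2 : G (C + 1) = K.x + 1) :
    ∀ s, G s = if s ≤ C then R1 K (G 0) s else Phi (K := K) (s - C - 1) := by
  intro s
  by_cases hs : s ≤ C
  · rw [if_pos hs]; exact CK1_det hG h1 s hs
  · rw [if_neg hs]
    have key : ∀ u, G (C + 1 + u) = Phi (K := K) u := by
      apply Phi_det (G := fun u => G (C + 1 + u))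
      · intro t; exact hG (C + 1 + t)
      · simpa using h2
    have := key (s - C - 1)
    rwa [show C + 1 + (s - C - 1) = s by omega] at this

end K

/-! The canonical walk of a spiral `S`: wind the left cycle `r` times,
then walk `1, 2, …, n`, then wind the right cycle forever. -/

def Wlk (S : SpiralData) (r t : ℕ) : ℕ :=
  if t < r * S.x then t % S.x + 1
  else if t - r * S.x < S.n then (t - r * S.x) + 1
  else S.y + (t - r * S.x - S.n) % (S.n - S.y + 1)

variable {S : SpiralData}

lemma Wlk_mem (r t : ℕ) : 1 ≤ Wlk S r t ∧ Wlk S r t ≤ S.n := by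
  have hb := bounds S
  unfold Wlk
  split
  · have : t % S.x < S.x := Nat.mod_lt _ (by omega)
    omega
  · split
    · omega
    · have : (t - r * S.x - S.n) % (S.n - S.y + 1) < S.n - S.y + 1 :=
        Nat.mod_lt _ (by omega)
      omega

lemma Wlk_head {r t : ℕ} (h : t ≤ r * S.x) : Wlk S r t = t % S.x + 1 := by
  have hb := bounds S
  unfold Wlk
  by_cases h1 : t < r * S.x
  · rw [if_pos h1]
  · have ht : t = r * S.x := by omega
    rw [if_neg h1, if_pos (by omega)]
    rw [ht, Nat.mul_mod_left]
    omega

lemma Wlk_zero (r : ℕ) : Wlk S r 0 = 1 := by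
  have hb := bounds S
  rw [Wlk_head (Nat.zero_le _), Nat.zero_mod]

lemma Wlk_mid {r u : ℕ} (h : u < S.n) : Wlk S r (r * S.x + u) = u + 1 := by
  have hb := bounds S
  unfold Wlk
  rw [if_neg (by omega), if_pos (by omega)]
  omega

lemma Wlk_tail {r u : ℕ} (h : S.n ≤ u) :
    Wlk S r (r * S.x + u) = S.y + (u - S.n) % (S.n - S.y + 1) := by
  have hb := bounds S
  unfold Wlk
  rw [if_neg (by omega), if_neg (by omega)]
  congr 2
  omega

lemma Wlk_rel (r t : ℕ) : spiralRelNat S (Wlk S r t) (Wlk S r (t + 1)) := by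
  have hb := bounds S
  by_cases h1 : t + 1 ≤ r * S.x
  · rw [Wlk_head (by omega), Wlk_head h1]
    have hsucc : (t + 1) % S.x = (t % S.x + 1) % S.x :=
      ((Nat.mod_modEq t S.x).add_right 1).symm
    set v := t % S.x with hv
    have hvlt : v < S.x := Nat.mod_lt _ (by omega)
    by_cases h2 : v + 1 = S.x
    · right; left
      constructor
      · omega
      · rw [hsucc, h2, Nat.mod_self]
    · left
      refine ⟨by omega, by omega, ?_⟩
      rw [hsucc, Nat.mod_eq_of_lt (by omega)]
  · -- t ≥ r * S.x
    have ht : t = r * S.x + (t - r * S.x) := by omega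
    set u := t - r * S.x with hu
    have ht1 : t + 1 = r * S.x + (u + 1) := by omega
    by_cases h2 : u + 1 < S.n
    · rw [ht, show r * S.x + u + 1 = r * S.x + (u + 1) by omega,
        Wlk_mid (by omega), Wlk_mid h2]
      left; omega
    · by_cases h3 : u + 1 = S.n
      · rw [ht, show r * S.x + u + 1 = r * S.x + (u + 1) by omega,
          Wlk_mid (by omega), Wlk_tail (by omega)]
        right; right
        rw [show u + 1 - S.n = 0 by omega]
        simp
        omega
      · -- u ≥ S.n
        rw [ht, show r * S.x + u + 1 = r * S.x + (u + 1) by omega,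
          Wlk_tail (by omega), Wlk_tail (by omega)]
        set c := S.n - S.y + 1 with hc
        have hsucc : (u + 1 - S.n) % c = ((u - S.n) % c + 1) % c := by
          rw [show u + 1 - S.n = (u - S.n) + 1 by omega]
          exact ((Nat.mod_modEq (u - S.n) c).add_right 1).symm
        set w := (u - S.n) % c with hw
        have hwlt : w < c := Nat.mod_lt _ (by omega)
        by_cases h4 : w + 1 = c
        · right; right
          constructor
          · omega
          · rw [hsucc, h4, Nat.mod_self]
            omega
        · left
          refine ⟨by omega, by omega, ?_⟩
          rw [hsucc, Nat.mod_eq_of_lt (by omega)]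
          omega

lemma Wlk_period_head {r t P : ℕ} (hP : P % S.x = 0) (h : t + P ≤ r * S.x) :
    Wlk S r (t + P) = Wlk S r t := by
  rw [Wlk_head h, Wlk_head (by omega)]
  have : (t + P) % S.x = t % S.x := by
    conv_rhs => rw [← Nat.add_zero t]
    exact (Nat.ModEq.refl t).add (by simpa [Nat.ModEq, hP])
  rw [this]

lemma Wlk_period_tail {r t P : ℕ} (hP : P % (S.n - S.y + 1) = 0)
    (h : r * S.x + S.n ≤ t) : Wlk S r (t + P) = Wlk S r t := by
  have ht : t = r * S.x + (t - r * S.x) := by omega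
  set u := t - r * S.x with hu
  have h2 : t + P = r * S.x + (u + P) := by omega
  rw [ht, show r * S.x + u + P = r * S.x + (u + P) by omega,
    Wlk_tail (by omega), Wlk_tail (by omega)]
  congr 1
  have : (u + P - S.n) = (u - S.n) + P := by omega
  rw [this]
  conv_rhs => rw [← Nat.add_zero (u - S.n)]
  exact (Nat.ModEq.refl (u - S.n)).add (by simpa [Nat.ModEq, hP])

lemma wind1_rel (S : SpiralData) (s : ℕ) :
    spiralRelNat S (s % S.x + 1) ((s + 1) % S.x + 1) := by
  have hb := bounds S
  have h := Wlk_rel (S := S) (s + 1) s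
  rwa [Wlk_head (by nlinarith), Wlk_head (by nlinarith)] at h

lemma wind2_rel (S : SpiralData) (s : ℕ) :
    spiralRelNat S (S.y + s % (S.n - S.y + 1)) (S.y + (s + 1) % (S.n - S.y + 1)) := by
  have hb := bounds S
  have h := Wlk_rel (S := S) 0 (S.n + s)
  have e1 : Wlk S 0 (S.n + s) = S.y + s % (S.n - S.y + 1) := by
    have h2 := Wlk_tail (S := S) (r := 0) (u := S.n + s) (by omega)
    rw [show 0 * S.x + (S.n + s) = S.n + s by omega,
      show S.n + s - S.n = s by omega] at h2
    exact h2
  have e2 : Wlk S 0 (S.n + s + 1) = S.y + (s + 1) % (S.n - S.y + 1) := by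
    have h2 := Wlk_tail (S := S) (r := 0) (u := S.n + (s + 1)) (by omega)
    rw [show 0 * S.x + (S.n + (s + 1)) = S.n + s + 1 by omega,
      show S.n + (s + 1) - S.n = s + 1 by omega] at h2
    exact h2
  rw [e1, e2] at h
  exact h

section K2
variable {K : SpiralData}

lemma walk_stays_out {G : ℕ → ℕ} (hG : ∀ t, spiralRelNat K (G t) (G (t + 1)))
    {t₀ : ℕ} (h : K.x < G t₀) {t : ℕ} (ht : t₀ ≤ t) : K.x < G t := by
  induction t, ht using Nat.le_induction with
  | base => exact h
  | succ n hn ih =>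
    by_contra hc
    exact absurd (intoCK1 (hG n) (by omega)) (by omega)

lemma walk_ck2 {G : ℕ → ℕ} (hG : ∀ t, spiralRelNat K (G t) (G (t + 1)))
    {t₀ : ℕ} (h1 : K.y ≤ G t₀) (h2 : G t₀ ≤ K.n) {t : ℕ} (ht : t₀ ≤ t) :
    K.y ≤ G t ∧ G t ≤ K.n := by
  induction t, ht using Nat.le_induction with
  | base => exact ⟨h1, h2⟩
  | succ n hn ih => exact CK2_closed (hG n) ih.1

lemma middle_climb {G : ℕ → ℕ} (hG : ∀ t, spiralRelNat K (G t) (G (t + 1)))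
    (h1 : K.x < G 0) (h2 : G 0 < K.y) :
    ∀ s, s ≤ K.y - G 0 → G s = G 0 + s := by
  intro s hs
  induction s with
  | zero => omega
  | succ n ih =>
    have hn := ih (by omega)
    have := middle_step (hG n) (by omega) (by omega)
    omega

variable {S : SpiralData} {F : ℕ → ℕ}
  (hF : ∀ a b, spiralRelNat S a b → spiralRelNat K (F a) (F b))

include hF

lemma path_out {l₀ : ℕ} (h : K.x < F l₀) (h1 : 1 ≤ l₀) :
    ∀ l, l₀ ≤ l → l ≤ S.n → K.x < F l := by
  intro l hl
  induction l, hl using Nat.le_induction with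
  | base => exact fun _ => h
  | succ n hn ih =>
    intro h2
    have hrel := hF n (n + 1) (Or.inl ⟨by omega, by omega, rfl⟩)
    have := ih (by omega)
    by_contra hc
    exact absurd (intoCK1 hrel (by omega)) (by omega)

lemma path_ck2 {l₀ : ℕ} (h : K.y ≤ F l₀) (h1 : 1 ≤ l₀) :
    ∀ l, l₀ ≤ l → l ≤ S.n → K.y ≤ F l := by
  intro l hl
  induction l, hl using Nat.le_induction with
  | base => exact fun _ => h
  | succ n hn ih =>
    intro h2
    have hrel := hF n (n + 1) (Or.inl ⟨by omega, by omega, rfl⟩)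
    exact (CK2_closed hrel (ih (by omega))).1

lemma wind_walk : ∀ t, spiralRelNat K (F (t % S.x + 1)) (F ((t + 1) % S.x + 1)) :=
  fun t => hF _ _ (wind1_rel S t)

lemma wind_ck1 (h1 : F 1 ≤ K.x) : ∀ l, 1 ≤ l → l ≤ S.x → F l ≤ K.x := by
  have hb := bounds S
  set G : ℕ → ℕ := fun t => F (t % S.x + 1) with hGdef
  have hGwalk : ∀ t, spiralRelNat K (G t) (G (t + 1)) := wind_walk hF
  have hall : ∀ t, G t ≤ K.x := by
    intro t
    by_contra hc
    have hT : K.x < G (S.x * (t + 1)) :=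
      walk_stays_out hGwalk (t₀ := t) (by omega) (by nlinarith)
    have hval : G (S.x * (t + 1)) = F 1 := by simp [hGdef, Nat.mul_mod_right]
    omega
  intro l hl1 hl2
  have := hall (l - 1)
  simp only [hGdef] at this
  rwa [Nat.mod_eq_of_lt (by omega), show l - 1 + 1 = l by omega] at this

lemma wind_ck2start (h1 : K.x < F 1) (hmem : F 1 ≤ K.n) : K.y ≤ F 1 := by
  have hb := bounds S
  have hbK := bounds K
  by_contra h2
  set G : ℕ → ℕ := fun t => F (t % S.x + 1) with hGdef
  have hGwalk : ∀ t, spiralRelNat K (G t) (G (t + 1)) := wind_walk hF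
  have hG0 : G 0 = F 1 := by simp [hGdef]
  set d := K.y - G 0 with hd
  have hGd : G d = K.y := by
    have := middle_climb hGwalk (by omega) (by omega) d (le_refl _)
    omega
  have hT := walk_ck2 hGwalk (t₀ := d) (by omega) (by omega)
    (t := S.x * (d + 1)) (by nlinarith)
  have hval : G (S.x * (d + 1)) = F 1 := by
    simp [hGdef, Nat.mul_mod_right]
  omega

end K2

/-! Nat-level version of a carrier map. -/

def Fn {S T : SpiralData} (f : SpiralCarrier S → SpiralCarrier T) (l : ℕ) : ℕ :=
  if h : 1 ≤ l ∧ l ≤ S.n then (f ⟨l, h⟩).1 else 1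

lemma Fn_val {S T : SpiralData} (f : SpiralCarrier S → SpiralCarrier T)
    {l : ℕ} (h : 1 ≤ l ∧ l ≤ S.n) : Fn f l = (f ⟨l, h⟩).1 := dif_pos h

lemma Fn_zero {S T : SpiralData} (f : SpiralCarrier S → SpiralCarrier T) :
    Fn f 0 = 1 := dif_neg (by omega)

lemma Fn_mem {S T : SpiralData} (f : SpiralCarrier S → SpiralCarrier T)
    {l : ℕ} (h1 : 1 ≤ l) (h2 : l ≤ S.n) : 1 ≤ Fn f l ∧ Fn f l ≤ T.n := by
  rw [Fn_val f ⟨h1, h2⟩]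
  exact (f _).2

lemma Fn_rel {S T : SpiralData} {f : SpiralCarrier S → SpiralCarrier T}
    (hf : RelPres (spiralRel S) (spiralRel T) f) {a b : ℕ}
    (h : spiralRelNat S a b) : spiralRelNat T (Fn f a) (Fn f b) := by
  have hm := rel_mem h
  rw [Fn_val f ⟨hm.1, hm.2.1⟩, Fn_val f ⟨hm.2.2.1, hm.2.2.2⟩]
  exact hf ⟨a, ⟨hm.1, hm.2.1⟩⟩ ⟨b, ⟨hm.2.2.1, hm.2.2.2⟩⟩ h

lemma Fn_surj {S T : SpiralData} {f : SpiralCarrier S → SpiralCarrier T}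
    (hf : Function.Surjective f) {b : ℕ} (h1 : 1 ≤ b) (h2 : b ≤ T.n) :
    ∃ a, 1 ≤ a ∧ a ≤ S.n ∧ Fn f a = b := by
  obtain ⟨⟨a, ha⟩, hfa⟩ := hf ⟨b, h1, h2⟩
  exact ⟨a, ha.1, ha.2, by rw [Fn_val f ha, hfa]⟩

/-! Assembly: from a pair of matching walks with wrap conditions, build the
amalgamating spiral. -/

lemma build {K L M : SpiralData}
    (f₁ : SpiralCarrier L → SpiralCarrier K)
    (f₂ : SpiralCarrier M → SpiralCarrier K)
    (lam mu : ℕ → ℕ)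
    (hlr : ∀ t, spiralRelNat L (lam t) (lam (t + 1)))
    (hlm : ∀ t, 1 ≤ lam t ∧ lam t ≤ L.n)
    (hmr : ∀ t, spiralRelNat M (mu t) (mu (t + 1)))
    (hmm : ∀ t, 1 ≤ mu t ∧ mu t ≤ M.n)
    (hmatch : ∀ t, Fn f₁ (lam t) = Fn f₂ (mu t))
    (xN yN nN : ℕ) (hx : 1 < xN) (hxy : xN < yN) (hyn : yN < nN)
    (hw1L : spiralRelNat L (lam (xN - 1)) (lam 0))
    (hw1M : spiralRelNat M (mu (xN - 1)) (mu 0))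
    (hw2L : spiralRelNat L (lam (nN - 1)) (lam (yN - 1)))
    (hw2M : spiralRelNat M (mu (nN - 1)) (mu (yN - 1)))
    (hsurj : ∀ l, 1 ≤ l → l ≤ L.n → ∃ t, t < nN ∧ lam t = l) :
    ∃ (N : SpiralData) (f₃ : SpiralCarrier N → SpiralCarrier L)
      (f₄ : SpiralCarrier N → SpiralCarrier M),
      RelPres (spiralRel N) (spiralRel L) f₃ ∧ Function.Surjective f₃ ∧
      RelPres (spiralRel N) (spiralRel M) f₄ ∧ f₁ ∘ f₃ = f₂ ∘ f₄ := by
  refine ⟨⟨nN, xN, yN, hx, hxy, hyn⟩,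
    fun i => ⟨lam (i.1 - 1), hlm _⟩, fun i => ⟨mu (i.1 - 1), hmm _⟩, ?_, ?_, ?_, ?_⟩
  · intro a b hab
    rcases hab with ⟨h1, h2, h3⟩ | ⟨h1, h2⟩ | ⟨h1, h2⟩
    · show spiralRelNat L (lam (a.1 - 1)) (lam (b.1 - 1))
      rw [h3, show a.1 + 1 - 1 = (a.1 - 1) + 1 by omega]
      exact hlr _
    · show spiralRelNat L (lam (a.1 - 1)) (lam (b.1 - 1))
      rw [h1, h2]
      simpa using hw1L
    · show spiralRelNat L (lam (a.1 - 1)) (lam (b.1 - 1))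
      rw [h1, h2]
      exact hw2L
  · rintro ⟨l, hl1, hl2⟩
    obtain ⟨t, ht, hlt⟩ := hsurj l hl1 hl2
    refine ⟨⟨t + 1, by omega, show t + 1 ≤ nN by omega⟩, ?_⟩
    apply Subtype.ext
    simpa using hlt
  · intro a b hab
    rcases hab with ⟨h1, h2, h3⟩ | ⟨h1, h2⟩ | ⟨h1, h2⟩
    · show spiralRelNat M (mu (a.1 - 1)) (mu (b.1 - 1))
      rw [h3, show a.1 + 1 - 1 = (a.1 - 1) + 1 by omega]
      exact hmr _
    · show spiralRelNat M (mu (a.1 - 1)) (mu (b.1 - 1))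
      rw [h1, h2]
      simpa using hw1M
    · show spiralRelNat M (mu (a.1 - 1)) (mu (b.1 - 1))
      rw [h1, h2]
      exact hw2M
  · funext i
    apply Subtype.ext
    show (f₁ ⟨lam (i.1 - 1), _⟩).1 = (f₂ ⟨mu (i.1 - 1), _⟩).1
    rw [← Fn_val f₁ (hlm _), ← Fn_val f₂ (hmm _)]
    exact hmatch _

end Spiral

/-- Amalgamation for spirals: given relation preserving `f₁ : L → K` and
`f₂ : M → K` with `f₂` onto, there are a spiral `N`, a relation preserving
surjection `f₃ : N → L` and a relation preserving `f₄ : N → M` with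
`f₁ ∘ f₃ = f₂ ∘ f₄`. -/
theorem spiral_amalgamation (K L M : SpiralData)
    (f₁ : SpiralCarrier L → SpiralCarrier K)
    (f₂ : SpiralCarrier M → SpiralCarrier K)
    (h₁ : RelPres (spiralRel L) (spiralRel K) f₁)
    (h₂ : RelPres (spiralRel M) (spiralRel K) f₂)
    (h₂s : Function.Surjective f₂) :
    ∃ (N : SpiralData) (f₃ : SpiralCarrier N → SpiralCarrier L)
      (f₄ : SpiralCarrier N → SpiralCarrier M),
      RelPres (spiralRel N) (spiralRel L) f₃ ∧ Function.Surjective f₃ ∧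
      RelPres (spiralRel N) (spiralRel M) f₄ ∧ f₁ ∘ f₃ = f₂ ∘ f₄ := by
  classical
  obtain ⟨hK1, hK2, hK3⟩ := Spiral.bounds K
  obtain ⟨hL1, hL2, hL3⟩ := Spiral.bounds L
  obtain ⟨hM1, hM2, hM3⟩ := Spiral.bounds M
  set F1 := Spiral.Fn f₁ with hF1def
  set F2 := Spiral.Fn f₂ with hF2def
  have hF1 : ∀ a b, spiralRelNat L a b → spiralRelNat K (F1 a) (F1 b) :=
    fun a b h => Spiral.Fn_rel h₁ h
  have hF2 : ∀ a b, spiralRelNat M a b → spiralRelNat K (F2 a) (F2 b) :=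
    fun a b h => Spiral.Fn_rel h₂ h
  have hF1mem : ∀ l, 1 ≤ l → l ≤ L.n → 1 ≤ F1 l ∧ F1 l ≤ K.n :=
    fun l u v => Spiral.Fn_mem f₁ u v
  have hF2mem : ∀ l, 1 ≤ l → l ≤ M.n → 1 ≤ F2 l ∧ F2 l ≤ K.n :=
    fun l u v => Spiral.Fn_mem f₂ u v
  -- general facts about `f₂` from surjectivity
  have hF2one : F2 1 ≤ K.x := by
    by_contra hcc
    obtain ⟨m, hm1, hm2, hm3⟩ := Spiral.Fn_surj h₂s (b := 1) (le_refl _) (by omega)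
    rw [← hF2def] at hm3
    have := Spiral.path_out hF2 (l₀ := 1) (by omega) (by omega) m hm1 hm2
    omega
  have hGA : ∀ m, 1 ≤ m → m ≤ M.x → F2 m ≤ K.x := Spiral.wind_ck1 hF2 hF2one
  have hF2Mn : K.y ≤ F2 M.n := by
    obtain ⟨m, hm1, hm2, hm3⟩ := Spiral.Fn_surj h₂s (b := K.n) (by omega) (le_refl _)
    rw [← hF2def] at hm3
    exact Spiral.path_ck2 hF2 (l₀ := m) (by omega) hm1 M.n hm2 (le_refl _)
  have hF2My : K.y ≤ F2 M.y := by
    have hrel := hF2 M.n M.y (Or.inr (Or.inr ⟨rfl, rfl⟩))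
    exact (Spiral.CK2_closed hrel hF2Mn).1
  have hGB : ∀ m, M.y ≤ m → m ≤ M.n → K.y ≤ F2 m :=
    fun m u v => Spiral.path_ck2 hF2 hF2My (by omega) m u v
  -- the common period
  set Λ := Nat.lcm (Nat.lcm L.x M.x) (Nat.lcm (L.n - L.y + 1) (M.n - M.y + 1))
    with hΛdef
  have hΛpos : 0 < Λ :=
    Nat.lcm_pos (Nat.lcm_pos (by omega) (by omega))
      (Nat.lcm_pos (by omega) (by omega))
  have hLxd : L.x ∣ Λ := dvd_trans (Nat.dvd_lcm_left _ _) (Nat.dvd_lcm_left _ _)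
  have hMxd : M.x ∣ Λ := dvd_trans (Nat.dvd_lcm_right _ _) (Nat.dvd_lcm_left _ _)
  have hcLd : (L.n - L.y + 1) ∣ Λ :=
    dvd_trans (Nat.dvd_lcm_left _ _) (Nat.dvd_lcm_right _ _)
  have hcMd : (M.n - M.y + 1) ∣ Λ :=
    dvd_trans (Nat.dvd_lcm_right _ _) (Nat.dvd_lcm_right _ _)
  have hΛ2 : 2 ≤ Λ := le_trans hL1 (Nat.le_of_dvd hΛpos hLxd)
  have hmodz : ∀ a b : ℕ, a ∣ b → b % a = 0 := by
    intro a b hab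
    obtain ⟨k, hk⟩ := hab
    rw [hk]
    exact Nat.mul_mod_right _ _
  have hΛmodL : Λ % L.x = 0 := hmodz _ _ hLxd
  have hΛmodM : Λ % M.x = 0 := hmodz _ _ hMxd
  have hΛmodcL : Λ % (L.n - L.y + 1) = 0 := hmodz _ _ hcLd
  have hΛmodcM : Λ % (M.n - M.y + 1) = 0 := hmodz _ _ hcMd
  by_cases hc1 : F1 1 ≤ K.x
  · by_cases hc2 : F1 L.y ≤ K.x
    · -- Case B : the image of `f₁` lies in the left cycle of `K`
      have hLall : ∀ l, 1 ≤ l → l ≤ L.n → F1 l ≤ K.x := by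
        intro l h1 h2
        rcases le_or_gt l L.y with h | h
        · by_contra hcc
          exact absurd (Spiral.path_out hF1 (l₀ := l) (by omega) h1 L.y h
            (by omega)) (by omega)
        · by_contra hcc
          have hn := Spiral.path_out hF1 (l₀ := l) (by omega) h1 L.n h2 (le_refl _)
          have hrel := hF1 L.n L.y (Or.inr (Or.inr ⟨rfl, rfl⟩))
          have := Spiral.intoCK1 hrel hc2
          omega
      have hGL : ∀ t, F1 (Spiral.Wlk L Λ t) = Spiral.R1 K (F1 1) t := by
        intro t
        have hwalk : ∀ s, spiralRelNat K (F1 (Spiral.Wlk L Λ s))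
            (F1 (Spiral.Wlk L Λ (s + 1))) :=
          fun s => hF1 _ _ (Spiral.Wlk_rel Λ s)
        have hmem : ∀ s, s ≤ t →
            1 ≤ F1 (Spiral.Wlk L Λ s) ∧ F1 (Spiral.Wlk L Λ s) ≤ K.x := by
          intro s _
          have hw := Spiral.Wlk_mem (S := L) Λ s
          exact ⟨(hF1mem _ hw.1 hw.2).1, hLall _ hw.1 hw.2⟩
        have h := Spiral.CK1_det hwalk hmem t (le_refl _)
        rwa [Spiral.Wlk_zero] at h
      have hGM : ∀ s, F2 (s % M.x + 1) = Spiral.R1 K (F2 1) s := by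
        intro s
        have hwalk := Spiral.wind_walk (S := M) (K := K) hF2
        have hmem : ∀ u, u ≤ s →
            1 ≤ F2 (u % M.x + 1) ∧ F2 (u % M.x + 1) ≤ K.x := by
          intro u _
          have : u % M.x < M.x := Nat.mod_lt _ (by omega)
          exact ⟨(hF2mem _ (by omega) (by omega)).1, hGA _ (by omega) (by omega)⟩
        have h := Spiral.CK1_det hwalk hmem s (le_refl _)
        simpa using h
      obtain ⟨β₀, hb1, hb2, hb3⟩ := Spiral.R1_surj (K := K)
        (a := F2 1) (b := Spiral.R1 K (F1 1) 1)
        (hF2mem 1 (by omega) (by omega)).1 hF2one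
        (Spiral.R1_mem _ _).1 (Spiral.R1_mem _ _).2
      set yN := Λ + Λ * L.x + L.n + 1 with hyNdef
      set nN := yN + Λ - 1 with hnNdef
      have hrx2 : 2 ≤ Λ * L.x := by nlinarith
      apply Spiral.build f₁ f₂ (fun t => Spiral.Wlk L Λ (1 + t))
        (fun t => (β₀ + t) % M.x + 1) ?hlr ?hlm ?hmr ?hmm ?hmatch
        Λ yN nN (by omega) (by omega) (by omega) ?w1L ?w1M ?w2L ?w2M ?hsurj
      case hlr => intro t; exact Spiral.Wlk_rel Λ (1 + t)
      case hlm => intro t; exact Spiral.Wlk_mem Λ (1 + t)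
      case hmr => intro t; exact Spiral.wind1_rel M (β₀ + t)
      case hmm =>
        intro t
        show 1 ≤ (β₀ + t) % M.x + 1 ∧ (β₀ + t) % M.x + 1 ≤ M.n
        have : (β₀ + t) % M.x < M.x := Nat.mod_lt _ (by omega)
        omega
      case hmatch =>
        intro t
        show Spiral.Fn f₁ _ = Spiral.Fn f₂ _
        rw [← hF1def, ← hF2def, hGL, hGM]
        calc Spiral.R1 K (F1 1) (1 + t)
            = Spiral.R1 K (Spiral.R1 K (F1 1) 1) t := (Spiral.R1_add _ _ _).symm
          _ = Spiral.R1 K (Spiral.R1 K (F2 1) β₀) t := by rw [hb3]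
          _ = Spiral.R1 K (F2 1) (β₀ + t) := Spiral.R1_add _ _ _
      case w1L =>
        show spiralRelNat L (Spiral.Wlk L Λ (1 + (Λ - 1))) (Spiral.Wlk L Λ (1 + 0))
        have e : Spiral.Wlk L Λ (1 + (Λ - 1)) = Spiral.Wlk L Λ 0 := by
          rw [show 1 + (Λ - 1) = 0 + Λ by omega]
          exact Spiral.Wlk_period_head hΛmodL (by nlinarith)
        rw [e]
        exact Spiral.Wlk_rel Λ 0
      case w1M =>
        show spiralRelNat M ((β₀ + (Λ - 1)) % M.x + 1) ((β₀ + 0) % M.x + 1)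
        obtain ⟨k, hk⟩ := hMxd
        have e : (β₀ + (Λ - 1)) % M.x = (β₀ - 1) % M.x := by
          rw [show β₀ + (Λ - 1) = (β₀ - 1) + M.x * k by omega]
          exact Nat.add_mul_mod_self_left _ _ _
        rw [e]
        have h := Spiral.wind1_rel M (β₀ - 1)
        rwa [show β₀ - 1 + 1 = β₀ + 0 by omega] at h
      case w2L =>
        show spiralRelNat L (Spiral.Wlk L Λ (1 + (nN - 1))) (Spiral.Wlk L Λ (1 + (yN - 1)))
        have e : Spiral.Wlk L Λ (1 + (nN - 1)) = Spiral.Wlk L Λ (yN - 1) := by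
          rw [show 1 + (nN - 1) = (yN - 1) + Λ by omega]
          exact Spiral.Wlk_period_tail hΛmodcL (by omega)
        rw [e, show 1 + (yN - 1) = (yN - 1) + 1 by omega]
        exact Spiral.Wlk_rel Λ (yN - 1)
      case w2M =>
        show spiralRelNat M ((β₀ + (nN - 1)) % M.x + 1) ((β₀ + (yN - 1)) % M.x + 1)
        obtain ⟨k, hk⟩ := hMxd
        have e : (β₀ + (nN - 1)) % M.x = (β₀ + yN - 2) % M.x := by
          rw [show β₀ + (nN - 1) = (β₀ + yN - 2) + M.x * k by omega]
          exact Nat.add_mul_mod_self_left _ _ _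
        rw [e]
        have h := Spiral.wind1_rel M (β₀ + yN - 2)
        rwa [show β₀ + yN - 2 + 1 = β₀ + (yN - 1) by omega] at h
      case hsurj =>
        intro l h1 h2
        refine ⟨Λ * L.x + l - 2, by omega, ?_⟩
        show Spiral.Wlk L Λ (1 + (Λ * L.x + l - 2)) = l
        rw [show 1 + (Λ * L.x + l - 2) = Λ * L.x + (l - 1) by omega,
          Spiral.Wlk_mid (by omega)]
        omega
    · -- Case A2 : the image of `f₁` crosses from the left cycle of `K`
      -- to the right cycle
      have hCL1 : ∀ l, 1 ≤ l → l ≤ L.x → F1 l ≤ K.x := Spiral.wind_ck1 hF1 hc1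
      have hexL : ∃ m, K.x < F1 m := ⟨L.y, by omega⟩
      set j1 := Nat.find hexL with hj1def
      have hj1P : K.x < F1 j1 := Nat.find_spec hexL
      have hj1min : ∀ m, m < j1 → F1 m ≤ K.x := by
        intro m hm
        have := Nat.find_min hexL hm
        omega
      have hj1le : j1 ≤ L.y := Nat.find_min' hexL (by omega)
      have hj1gtLx : L.x < j1 := by
        by_contra hcc
        have h0 : 1 ≤ j1 := by
          by_contra h0
          have hz : j1 = 0 := by omega
          rw [hz, hF1def, Spiral.Fn_zero] at hj1P
          omega
        exact absurd hj1P (not_lt.2 (hCL1 j1 h0 (by omega)))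
      set j := j1 - 1 with hjdef
      have hjrel : spiralRelNat L j j1 :=
        Or.inl ⟨by omega, by omega, by omega⟩
      have hexit := Spiral.exitCK1 (hF1 j j1 hjrel) (hj1min j (by omega)) hj1P
      -- the first crossing of `F2`
      have hexM : ∃ m, K.x < F2 m := ⟨M.n, by have := hGB M.n (by omega) (le_refl _); omega⟩
      set m1 := Nat.find hexM with hm1def
      have hm1P : K.x < F2 m1 := Nat.find_spec hexM
      have hm1min : ∀ m, m < m1 → F2 m ≤ K.x := by
        intro m hm
        have := Nat.find_min hexM hm
        omega
      have hm1le : m1 ≤ M.n := Nat.find_min' hexM (by have := hGB M.n (by omega) (le_refl _); omega)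
      have hm1gtMx : M.x < m1 := by
        by_contra hcc
        have h0 : 1 ≤ m1 := by
          by_contra h0
          have hz : m1 = 0 := by omega
          rw [hz, hF2def, Spiral.Fn_zero] at hm1P
          omega
        exact absurd hm1P (not_lt.2 (hGA m1 h0 (by omega)))
      set μ := m1 - 1 with hμdef
      have hμrel : spiralRelNat M μ m1 :=
        Or.inl ⟨by omega, by omega, by omega⟩
      have hexitM := Spiral.exitCK1 (hF2 μ m1 hμrel) (hm1min μ (by omega)) hm1P
      have hμltMy : μ < M.y := by
        by_contra hcc
        have := hGB μ (by omega) (by omega)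
        omega
      -- parameters
      set r := Λ + μ with hrdef
      have hrL2 : 2 * (Λ + μ) ≤ r * L.x := by
        have h2 : r * 2 ≤ r * L.x := Nat.mul_le_mul_left r (by omega)
        omega
      set CL := r * L.x + j - 1 with hCLdef
      have hprofL : ∀ s, F1 (Spiral.Wlk L r s) =
          if s ≤ CL then Spiral.R1 K (F1 1) s
          else Spiral.Phi (K := K) (s - CL - 1) := by
        have hwalk : ∀ s, spiralRelNat K (F1 (Spiral.Wlk L r s))
            (F1 (Spiral.Wlk L r (s + 1))) :=
          fun s => hF1 _ _ (Spiral.Wlk_rel r s)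
        have hmem : ∀ s, s ≤ CL →
            1 ≤ F1 (Spiral.Wlk L r s) ∧ F1 (Spiral.Wlk L r s) ≤ K.x := by
          intro s hs
          have hw := Spiral.Wlk_mem (S := L) r s
          refine ⟨(hF1mem _ hw.1 hw.2).1, ?_⟩
          rcases le_or_gt s (r * L.x) with h | h
          · rw [Spiral.Wlk_head h]
            have : s % L.x < L.x := Nat.mod_lt _ (by omega)
            exact hCL1 _ (by omega) (by omega)
          · rw [show s = r * L.x + (s - r * L.x) by omega,
              Spiral.Wlk_mid (by omega)]
            exact hj1min _ (by omega)
        have hcross : F1 (Spiral.Wlk L r (CL + 1)) = K.x + 1 := by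
          rw [show CL + 1 = r * L.x + j by omega, Spiral.Wlk_mid (by omega),
            show j + 1 = j1 by omega]
          exact hexit.2
        intro s
        have h := Spiral.profile hwalk hmem hcross s
        rwa [Spiral.Wlk_zero] at h
      obtain ⟨β₀, hb01, hb02, hb03⟩ := Spiral.R1_surj (K := K)
        (a := F2 1) (b := Spiral.R1 K (F1 1) 1)
        (hF2mem 1 (by omega) (by omega)).1 hF2one
        (Spiral.R1_mem _ _).1 (Spiral.R1_mem _ _).2
      set q := r * L.x + β₀ + j with hqdef
      set CM := q * M.x + μ - 1 with hCMdef
      have hq2 : 2 * q ≤ q * M.x := by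
        have h2 : q * 2 ≤ q * M.x := Nat.mul_le_mul_left q (by omega)
        omega
      have hprofM : ∀ s, F2 (Spiral.Wlk M q s) =
          if s ≤ CM then Spiral.R1 K (F2 1) s
          else Spiral.Phi (K := K) (s - CM - 1) := by
        have hwalk : ∀ s, spiralRelNat K (F2 (Spiral.Wlk M q s))
            (F2 (Spiral.Wlk M q (s + 1))) :=
          fun s => hF2 _ _ (Spiral.Wlk_rel q s)
        have hmem : ∀ s, s ≤ CM →
            1 ≤ F2 (Spiral.Wlk M q s) ∧ F2 (Spiral.Wlk M q s) ≤ K.x := by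
          intro s hs
          have hw := Spiral.Wlk_mem (S := M) q s
          refine ⟨(hF2mem _ hw.1 hw.2).1, ?_⟩
          rcases le_or_gt s (q * M.x) with h | h
          · rw [Spiral.Wlk_head h]
            have : s % M.x < M.x := Nat.mod_lt _ (by omega)
            exact hGA _ (by omega) (by omega)
          · rw [show s = q * M.x + (s - q * M.x) by omega,
              Spiral.Wlk_mid (by omega)]
            exact hm1min _ (by omega)
        have hcross : F2 (Spiral.Wlk M q (CM + 1)) = K.x + 1 := by
          rw [show CM + 1 = q * M.x + μ by omega, Spiral.Wlk_mid (by omega),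
            show μ + 1 = m1 by omega]
          exact hexitM.2
        intro s
        have h := Spiral.profile hwalk hmem hcross s
        rwa [Spiral.Wlk_zero] at h
      -- the alignment congruence
      have eL : Spiral.R1 K (F1 1) CL = K.x := by
        have h := hprofL CL
        rw [if_pos (le_refl _), show CL = r * L.x + (j - 1) by omega,
          Spiral.Wlk_mid (by omega), show j - 1 + 1 = j by omega] at h
        rw [show CL = r * L.x + (j - 1) by omega]
        rw [← h]
        exact hexit.1
      have eM : Spiral.R1 K (F2 1) CM = K.x := by
        have h := hprofM CM
        rw [if_pos (le_refl _), show CM = q * M.x + (μ - 1) by omega,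
          Spiral.Wlk_mid (by omega), show μ - 1 + 1 = μ by omega] at h
        rw [show CM = q * M.x + (μ - 1) by omega]
        rw [← h]
        exact hexitM.1
      have e1 : Spiral.R1 K (F1 1) (r * L.x + j) = Spiral.R1 K (F2 1) (q * M.x + μ) := by
        calc Spiral.R1 K (F1 1) (r * L.x + j)
            = Spiral.R1 K (Spiral.R1 K (F1 1) CL) 1 := by
              rw [Spiral.R1_add]; congr 1; omega
          _ = Spiral.R1 K (Spiral.R1 K (F2 1) CM) 1 := by rw [eL, eM]
          _ = Spiral.R1 K (F2 1) (q * M.x + μ) := by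
              rw [Spiral.R1_add]; congr 1; omega
      have e2 : Spiral.R1 K (F2 1) (β₀ + (r * L.x + j - 1))
          = Spiral.R1 K (F2 1) (q * M.x + μ) := by
        calc Spiral.R1 K (F2 1) (β₀ + (r * L.x + j - 1))
            = Spiral.R1 K (Spiral.R1 K (F2 1) β₀) (r * L.x + j - 1) :=
              (Spiral.R1_add _ _ _).symm
          _ = Spiral.R1 K (Spiral.R1 K (F1 1) 1) (r * L.x + j - 1) := by rw [hb03]
          _ = Spiral.R1 K (F1 1) (1 + (r * L.x + j - 1)) := Spiral.R1_add _ _ _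
          _ = Spiral.R1 K (F1 1) (r * L.x + j) := by congr 1; omega
          _ = Spiral.R1 K (F2 1) (q * M.x + μ) := e1
      have hcong := Spiral.R1_inj e2
      have hge : β₀ + (r * L.x + j - 1) ≤ q * M.x + μ := by omega
      obtain ⟨v, hv⟩ := (Nat.modEq_iff_dvd' hge).mp hcong
      set β := β₀ + K.x * v with hβdef
      have hβCM : β + CL = CM + 1 := by omega
      have hβ1 : 1 ≤ β := by omega
      have hmatch : ∀ t, F1 (Spiral.Wlk L r (1 + t)) = F2 (Spiral.Wlk M q (β + t)) := by
        intro t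
        rw [hprofL, hprofM]
        rcases le_or_gt (1 + t) CL with h | h
        · rw [if_pos h, if_pos (by omega)]
          have hmod : Spiral.R1 K (F2 1) (β + t) = Spiral.R1 K (F2 1) (β₀ + t) := by
            apply Spiral.R1_modeq
            show (β + t) % K.x = (β₀ + t) % K.x
            rw [show β + t = β₀ + t + K.x * v by omega]
            exact Nat.add_mul_mod_self_left _ _ _
          rw [hmod]
          calc Spiral.R1 K (F1 1) (1 + t)
              = Spiral.R1 K (Spiral.R1 K (F1 1) 1) t := (Spiral.R1_add _ _ _).symm
            _ = Spiral.R1 K (Spiral.R1 K (F2 1) β₀) t := by rw [hb03]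
            _ = Spiral.R1 K (F2 1) (β₀ + t) := Spiral.R1_add _ _ _
        · rw [if_neg (by omega), if_neg (by omega)]
          congr 1
          omega
      have hwin1 : (β - 1) + Λ ≤ q * M.x := by omega
      set yN := Λ + r * L.x + L.n + q * M.x + M.n + 2 with hyNdef
      set nN := yN + Λ - 1 with hnNdef
      apply Spiral.build f₁ f₂ (fun t => Spiral.Wlk L r (1 + t))
        (fun t => Spiral.Wlk M q (β + t)) ?hlr ?hlm ?hmr ?hmm ?hmatch
        Λ yN nN (by omega) (by omega) (by omega) ?w1L ?w1M ?w2L ?w2M ?hsurj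
      case hlr => intro t; exact Spiral.Wlk_rel r (1 + t)
      case hlm => intro t; exact Spiral.Wlk_mem r (1 + t)
      case hmr => intro t; exact Spiral.Wlk_rel q (β + t)
      case hmm => intro t; exact Spiral.Wlk_mem q (β + t)
      case hmatch =>
        intro t
        show Spiral.Fn f₁ _ = Spiral.Fn f₂ _
        rw [← hF1def, ← hF2def]
        exact hmatch t
      case w1L =>
        show spiralRelNat L (Spiral.Wlk L r (1 + (Λ - 1))) (Spiral.Wlk L r (1 + 0))
        have e : Spiral.Wlk L r (1 + (Λ - 1)) = Spiral.Wlk L r 0 := by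
          rw [show 1 + (Λ - 1) = 0 + Λ by omega]
          exact Spiral.Wlk_period_head hΛmodL (by omega)
        rw [e]
        exact Spiral.Wlk_rel r 0
      case w1M =>
        show spiralRelNat M (Spiral.Wlk M q (β + (Λ - 1))) (Spiral.Wlk M q (β + 0))
        have e : Spiral.Wlk M q (β + (Λ - 1)) = Spiral.Wlk M q (β - 1) := by
          rw [show β + (Λ - 1) = (β - 1) + Λ by omega]
          exact Spiral.Wlk_period_head hΛmodM (by omega)
        rw [e, show β + 0 = (β - 1) + 1 by omega]
        exact Spiral.Wlk_rel q (β - 1)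
      case w2L =>
        show spiralRelNat L (Spiral.Wlk L r (1 + (nN - 1))) (Spiral.Wlk L r (1 + (yN - 1)))
        have e : Spiral.Wlk L r (1 + (nN - 1)) = Spiral.Wlk L r (yN - 1) := by
          rw [show 1 + (nN - 1) = (yN - 1) + Λ by omega]
          exact Spiral.Wlk_period_tail hΛmodcL (by omega)
        rw [e, show 1 + (yN - 1) = (yN - 1) + 1 by omega]
        exact Spiral.Wlk_rel r (yN - 1)
      case w2M =>
        show spiralRelNat M (Spiral.Wlk M q (β + (nN - 1))) (Spiral.Wlk M q (β + (yN - 1)))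
        have e : Spiral.Wlk M q (β + (nN - 1)) = Spiral.Wlk M q (β + yN - 2) := by
          rw [show β + (nN - 1) = (β + yN - 2) + Λ by omega]
          exact Spiral.Wlk_period_tail hΛmodcM (by omega)
        rw [e, show β + (yN - 1) = (β + yN - 2) + 1 by omega]
        exact Spiral.Wlk_rel q (β + yN - 2)
      case hsurj =>
        intro l h1 h2
        refine ⟨r * L.x + l - 2, by omega, ?_⟩
        show Spiral.Wlk L r (1 + (r * L.x + l - 2)) = l
        rw [show 1 + (r * L.x + l - 2) = r * L.x + (l - 1) by omega,
          Spiral.Wlk_mid (by omega)]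
        omega
  · -- Case A1 : the image of `f₁` lies in the right cycle of `K`
    have hF1one : K.y ≤ F1 1 :=
      Spiral.wind_ck2start hF1 (by omega) (hF1mem 1 (by omega) (by omega)).2
    have hLall : ∀ l, 1 ≤ l → l ≤ L.n → K.y ≤ F1 l :=
      fun l u v => Spiral.path_ck2 hF1 hF1one (by omega) l u v
    have hGL : ∀ t, F1 (Spiral.Wlk L Λ t) = Spiral.R2 K (F1 1) t := by
      intro t
      have hwalk : ∀ s, spiralRelNat K (F1 (Spiral.Wlk L Λ s))
          (F1 (Spiral.Wlk L Λ (s + 1))) :=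
        fun s => hF1 _ _ (Spiral.Wlk_rel Λ s)
      have hmem : ∀ s, s ≤ t →
          K.y ≤ F1 (Spiral.Wlk L Λ s) ∧ F1 (Spiral.Wlk L Λ s) ≤ K.n := by
        intro s _
        have hw := Spiral.Wlk_mem (S := L) Λ s
        exact ⟨hLall _ hw.1 hw.2, (hF1mem _ hw.1 hw.2).2⟩
      have h := Spiral.CK2_det hwalk hmem t (le_refl _)
      rwa [Spiral.Wlk_zero] at h
    have hGM : ∀ s, F2 (M.y + s % (M.n - M.y + 1)) = Spiral.R2 K (F2 M.y) s := by
      intro s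
      have hwalk : ∀ u, spiralRelNat K (F2 (M.y + u % (M.n - M.y + 1)))
          (F2 (M.y + (u + 1) % (M.n - M.y + 1))) :=
        fun u => hF2 _ _ (Spiral.wind2_rel M u)
      have hmem : ∀ u, u ≤ s → K.y ≤ F2 (M.y + u % (M.n - M.y + 1)) ∧
          F2 (M.y + u % (M.n - M.y + 1)) ≤ K.n := by
        intro u _
        have : u % (M.n - M.y + 1) < M.n - M.y + 1 := Nat.mod_lt _ (by omega)
        exact ⟨hGB _ (by omega) (by omega), (hF2mem _ (by omega) (by omega)).2⟩
      have h := Spiral.CK2_det hwalk hmem s (le_refl _)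
      simpa using h
    obtain ⟨β₀, hb1, hb2, hb3⟩ := Spiral.R2_surj (K := K)
      (a := F2 M.y) (b := Spiral.R2 K (F1 1) 1)
      hF2My (hF2mem M.y (by omega) (by omega)).2
      (Spiral.R2_mem _ _).1 (Spiral.R2_mem _ _).2
    set yN := Λ + Λ * L.x + L.n + 1 with hyNdef
    set nN := yN + Λ - 1 with hnNdef
    have hrx2 : 2 ≤ Λ * L.x := by nlinarith
    apply Spiral.build f₁ f₂ (fun t => Spiral.Wlk L Λ (1 + t))
      (fun t => M.y + (β₀ + t) % (M.n - M.y + 1)) ?hlr ?hlm ?hmr ?hmm ?hmatch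
      Λ yN nN (by omega) (by omega) (by omega) ?w1L ?w1M ?w2L ?w2M ?hsurj
    case hlr => intro t; exact Spiral.Wlk_rel Λ (1 + t)
    case hlm => intro t; exact Spiral.Wlk_mem Λ (1 + t)
    case hmr => intro t; exact Spiral.wind2_rel M (β₀ + t)
    case hmm =>
      intro t
      show 1 ≤ M.y + (β₀ + t) % (M.n - M.y + 1) ∧
        M.y + (β₀ + t) % (M.n - M.y + 1) ≤ M.n
      have : (β₀ + t) % (M.n - M.y + 1) < M.n - M.y + 1 := Nat.mod_lt _ (by omega)
      omega
    case hmatch =>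
      intro t
      show Spiral.Fn f₁ _ = Spiral.Fn f₂ _
      rw [← hF1def, ← hF2def, hGL, hGM]
      calc Spiral.R2 K (F1 1) (1 + t)
          = Spiral.R2 K (Spiral.R2 K (F1 1) 1) t := (Spiral.R2_add _ _ _).symm
        _ = Spiral.R2 K (Spiral.R2 K (F2 M.y) β₀) t := by rw [hb3]
        _ = Spiral.R2 K (F2 M.y) (β₀ + t) := Spiral.R2_add _ _ _
    case w1L =>
      show spiralRelNat L (Spiral.Wlk L Λ (1 + (Λ - 1))) (Spiral.Wlk L Λ (1 + 0))
      have e : Spiral.Wlk L Λ (1 + (Λ - 1)) = Spiral.Wlk L Λ 0 := by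
        rw [show 1 + (Λ - 1) = 0 + Λ by omega]
        exact Spiral.Wlk_period_head hΛmodL (by nlinarith)
      rw [e]
      exact Spiral.Wlk_rel Λ 0
    case w1M =>
      show spiralRelNat M (M.y + (β₀ + (Λ - 1)) % (M.n - M.y + 1))
        (M.y + (β₀ + 0) % (M.n - M.y + 1))
      obtain ⟨k, hk⟩ := hcMd
      have e : (β₀ + (Λ - 1)) % (M.n - M.y + 1) = (β₀ - 1) % (M.n - M.y + 1) := by
        rw [show β₀ + (Λ - 1) = (β₀ - 1) + (M.n - M.y + 1) * k by omega]
        exact Nat.add_mul_mod_self_left _ _ _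
      rw [e]
      have h := Spiral.wind2_rel M (β₀ - 1)
      rwa [show β₀ - 1 + 1 = β₀ + 0 by omega] at h
    case w2L =>
      show spiralRelNat L (Spiral.Wlk L Λ (1 + (nN - 1))) (Spiral.Wlk L Λ (1 + (yN - 1)))
      have e : Spiral.Wlk L Λ (1 + (nN - 1)) = Spiral.Wlk L Λ (yN - 1) := by
        rw [show 1 + (nN - 1) = (yN - 1) + Λ by omega]
        exact Spiral.Wlk_period_tail hΛmodcL (by omega)
      rw [e, show 1 + (yN - 1) = (yN - 1) + 1 by omega]
      exact Spiral.Wlk_rel Λ (yN - 1)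
    case w2M =>
      show spiralRelNat M (M.y + (β₀ + (nN - 1)) % (M.n - M.y + 1))
        (M.y + (β₀ + (yN - 1)) % (M.n - M.y + 1))
      obtain ⟨k, hk⟩ := hcMd
      have e : (β₀ + (nN - 1)) % (M.n - M.y + 1)
          = (β₀ + yN - 2) % (M.n - M.y + 1) := by
        rw [show β₀ + (nN - 1) = (β₀ + yN - 2) + (M.n - M.y + 1) * k by omega]
        exact Nat.add_mul_mod_self_left _ _ _
      rw [e]
      have h := Spiral.wind2_rel M (β₀ + yN - 2)
      rwa [show β₀ + yN - 2 + 1 = β₀ + (yN - 1) by omega] at h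
    case hsurj =>
      intro l h1 h2
      refine ⟨Λ * L.x + l - 2, by omega, ?_⟩
      show Spiral.Wlk L Λ (1 + (Λ * L.x + l - 2)) = l
      rw [show 1 + (Λ * L.x + l - 2) = Λ * L.x + (l - 1) by omega,
        Spiral.Wlk_mid (by omega)]
      omega
end

section
/- Let M = {1,…,m} and N = {1,…,n} be spirals with left nodes x_M, x_N and right nodes y_M, y_N, and let f: N → M be a relation preserving map that is onto M. Then there exists exactly one pair (a,b) with x_N ≤ a < b ≤ y_N (i.e., a and b lie in the middle line of N) such that f(a) = x_M, f(b) = y_M, and b − a = y_M − x_M. -/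
/-- If `f : N → M` is a relation preserving map between spirals that is onto
`M`, then there is exactly one pair `(a, b)` in the middle line of `N` with
`a < b`, `f a = x_M`, `f b = y_M`, and `b - a = y_M - x_M`. -/
theorem onto_spiral_map_unique_pair (M N : SpiralData)
    (f : SpiralCarrier N → SpiralCarrier M)
    (hf : RelPres (spiralRel N) (spiralRel M) f)
    (hfs : Function.Surjective f) :
    ∃! p : SpiralCarrier N × SpiralCarrier N,
      N.x ≤ p.1.1 ∧ p.1.1 < p.2.1 ∧ p.2.1 ≤ N.y ∧
      f p.1 = leftNode M ∧ f p.2 = rightNode M ∧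
      p.2.1 - p.1.1 = M.y - M.x := by
  classical
  have hM1 := M.one_lt_x; have hM2 := M.x_lt_y; have hM3 := M.y_lt_n
  have hN1 := N.one_lt_x; have hN2 := N.x_lt_y; have hN3 := N.y_lt_n
  obtain ⟨g, gdef⟩ : ∃ g : ℕ → ℕ, ∀ p : SpiralCarrier N, g p.1 = (f p).1 :=
    ⟨fun i => if h : 1 ≤ i ∧ i ≤ N.n then (f ⟨i, h⟩).1 else 0,
      by rintro ⟨i, h⟩; exact dif_pos h⟩
  have gbd : ∀ i, 1 ≤ i → i ≤ N.n → 1 ≤ g i ∧ g i ≤ M.n := by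
    intro i h1 h2
    have e := gdef ⟨i, h1, h2⟩
    rw [e]
    exact (f ⟨i, h1, h2⟩).2
  have hstep' : ∀ p q : SpiralCarrier N, spiralRel N p q →
      spiralRelNat M (g p.1) (g q.1) := by
    intro p q h
    rw [gdef p, gdef q]
    exact hf p q h
  have hstep : ∀ i, 1 ≤ i → i < N.n → spiralRelNat M (g i) (g (i + 1)) := by
    intro i h1 h2
    exact hstep' ⟨i, h1, by omega⟩ ⟨i + 1, by omega, by omega⟩ (Or.inl ⟨h1, h2, rfl⟩)
  have hedgeL : spiralRelNat M (g N.x) (g 1) :=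
    hstep' ⟨N.x, by omega, by omega⟩ ⟨1, le_rfl, by omega⟩ (Or.inr (Or.inl ⟨rfl, rfl⟩))
  have hedgeR : spiralRelNat M (g N.n) (g N.y) :=
    hstep' ⟨N.n, by omega, le_rfl⟩ ⟨N.y, by omega, by omega⟩ (Or.inr (Or.inr ⟨rfl, rfl⟩))
  -- L1: values grow by at most 1 per step
  have L1 : ∀ i, 1 ≤ i → ∀ j, i ≤ j → j ≤ N.n → g j ≤ g i + (j - i) := by
    intro i h1 j hij
    induction j, hij using Nat.le_induction with
    | base => intro _; omega
    | succ j hij ih =>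
      intro hj
      have ihj := ih (by omega)
      have hbi := gbd i h1 (by omega)
      rcases hstep j (by omega) (by omega) with ⟨_, _, h⟩ | ⟨h, h'⟩ | ⟨h, h'⟩ <;> omega
  -- L2: once above M.x, always above M.x
  have L2 : ∀ i, 1 ≤ i → ∀ j, i ≤ j → j ≤ N.n → M.x < g i → M.x < g j := by
    intro i h1 j hij
    induction j, hij using Nat.le_induction with
    | base => exact fun _ h => h
    | succ j hij ih =>
      intro hj hx
      have ihj := ih (by omega) hx
      rcases hstep j (by omega) (by omega) with ⟨_, _, h⟩ | ⟨h, h'⟩ | ⟨h, h'⟩ <;> omega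
  -- L3: once at least M.y, always at least M.y
  have L3 : ∀ i, 1 ≤ i → ∀ j, i ≤ j → j ≤ N.n → M.y ≤ g i → M.y ≤ g j := by
    intro i h1 j hij
    induction j, hij using Nat.le_induction with
    | base => exact fun _ h => h
    | succ j hij ih =>
      intro hj hx
      have ihj := ih (by omega) hx
      rcases hstep j (by omega) (by omega) with ⟨_, _, h⟩ | ⟨h, h'⟩ | ⟨h, h'⟩ <;> omega
  -- L4: deterministic straight climb after leaving the left circle
  have L4 : ∀ a, 1 ≤ a → g a = M.x → M.x < g (a + 1) →
      ∀ k, k ≤ M.n - M.x → a + k ≤ N.n → g (a + k) = M.x + k := by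
    intro a ha hga hga1 k
    induction k with
    | zero => intro _ _; simpa using hga
    | succ k ih =>
      intro hk hkn
      have ihk := ih (by omega) (by omega)
      show g (a + k + 1) = M.x + (k + 1)
      rcases hstep (a + k) (by omega) (by omega) with ⟨_, _, h⟩ | ⟨h, h'⟩ | ⟨h, h'⟩
      · omega
      · have hk0 : k = 0 := by omega
        subst hk0
        simp only [Nat.add_zero] at h' ⊢
        omega
      · omega
  -- surjectivity witnesses
  obtain ⟨p1, hp1⟩ := hfs ⟨1, le_rfl, by omega⟩
  obtain ⟨pm, hpm⟩ := hfs ⟨M.n, by omega, le_rfl⟩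
  have hgp1 : g p1.1 = 1 := (gdef p1).trans (congrArg Subtype.val hp1)
  have hgpm : g pm.1 = M.n := (gdef pm).trans (congrArg Subtype.val hpm)
  have hp1b := p1.2
  have hpmb := pm.2
  -- the last index with value ≤ M.x
  obtain ⟨a, ha1, han, hax, hmax⟩ :
      ∃ a, 1 ≤ a ∧ a ≤ N.n ∧ g a ≤ M.x ∧
        ∀ j, 1 ≤ j → j ≤ N.n → g j ≤ M.x → j ≤ a := by
    set S : Finset ℕ := (Finset.Icc 1 N.n).filter (fun i => g i ≤ M.x) with hS
    have hSne : S.Nonempty := by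
      refine ⟨p1.1, ?_⟩
      simp only [hS, Finset.mem_filter, Finset.mem_Icc]
      exact ⟨⟨hp1b.1, hp1b.2⟩, by omega⟩
    have hmem := S.max'_mem hSne
    simp only [hS, Finset.mem_filter, Finset.mem_Icc] at hmem
    refine ⟨S.max' hSne, hmem.1.1, hmem.1.2, hmem.2, ?_⟩
    intro j h1 h2 h3
    apply S.le_max' j
    simp only [hS, Finset.mem_filter, Finset.mem_Icc]
    exact ⟨⟨h1, h2⟩, h3⟩
  have hgt : ∀ j, a < j → j ≤ N.n → M.x < g j := by
    intro j hj hjn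
    by_contra h
    have := hmax j (by omega) hjn (by omega)
    omega
  have hapm : a < pm.1 := by
    by_contra h
    have := L2 pm.1 hpmb.1 a (by omega) han (by omega)
    omega
  have han' : a < N.n := by omega
  have hga1 : M.x < g (a + 1) := hgt (a + 1) (by omega) (by omega)
  have hgax : g a = M.x ∧ g (a + 1) = M.x + 1 := by
    rcases hstep a ha1 han' with ⟨_, _, h⟩ | ⟨h, h'⟩ | ⟨h, h'⟩ <;> omega
  obtain ⟨hgax1, hgax2⟩ := hgax
  have hnbig : a + (M.n - M.x) ≤ N.n := by
    rcases le_or_gt (pm.1 - a) (M.n - M.x) with h | h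
    · have h4 := L4 a ha1 hgax1 hga1 (pm.1 - a) h (by omega)
      have e : a + (pm.1 - a) = pm.1 := by omega
      rw [e] at h4
      omega
    · omega
  obtain ⟨b, hb⟩ : ∃ b, b = a + (M.y - M.x) := ⟨_, rfl⟩
  have hbn : b ≤ N.n := by omega
  have hgb : g b = M.y := by
    have h4 := L4 a ha1 hgax1 hga1 (M.y - M.x) (by omega) (by omega)
    rw [hb]
    omega
  have hgn : M.y ≤ g N.n := L3 b (by omega) N.n hbn le_rfl hgb.ge
  have hxa : N.x ≤ a := by
    by_contra h
    have hx_gt : M.x < g N.x := hgt N.x (by omega) (by omega)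
    have h1a : g 1 ≤ M.x := by
      by_contra h'
      have := L2 1 le_rfl a (by omega) han (by omega)
      omega
    rcases hedgeL with ⟨_, _, h'⟩ | ⟨h', h''⟩ | ⟨h', h''⟩ <;> omega
  have hby : b ≤ N.y := by
    by_contra h
    push_neg at h
    rcases le_or_gt N.y a with hya | hya
    · have hy_le : g N.y ≤ M.x := by
        by_contra h'
        have := L2 N.y (by omega) a hya han (by omega)
        omega
      rcases hedgeR with ⟨_, _, h'⟩ | ⟨h', h''⟩ | ⟨h', h''⟩ <;> omega
    · have h4 := L4 a ha1 hgax1 hga1 (N.y - a) (by omega) (by omega)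
      have e : a + (N.y - a) = N.y := by omega
      rw [e] at h4
      rcases hedgeR with ⟨_, _, h'⟩ | ⟨h', h''⟩ | ⟨h', h''⟩ <;> omega
  refine ⟨(⟨a, ha1, han⟩, ⟨b, by omega, hbn⟩),
    ⟨hxa, by show a < b; omega, hby, ?_, ?_, by show b - a = M.y - M.x; omega⟩, ?_⟩
  · exact Subtype.ext ((gdef ⟨a, ha1, han⟩).symm.trans hgax1)
  · exact Subtype.ext ((gdef ⟨b, by omega, hbn⟩).symm.trans hgb)
  · rintro ⟨⟨a', ha'⟩, ⟨b', hb'⟩⟩ ⟨hq1, hq2, hq3, hq4, hq5, hq6⟩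
    have hq1' : N.x ≤ a' := hq1
    have hq2' : a' < b' := hq2
    have hq3' : b' ≤ N.y := hq3
    have hq6' : b' - a' = M.y - M.x := hq6
    have hga' : g a' = M.x := (gdef ⟨a', ha'⟩).trans (congrArg Subtype.val hq4)
    have hgb' : g b' = M.y := (gdef ⟨b', hb'⟩).trans (congrArg Subtype.val hq5)
    have hb'e : b' = a' + (M.y - M.x) := by omega
    have ha'le : a' ≤ a := hmax a' ha'.1 ha'.2 (by omega)
    have hstep1 : M.x < g (a' + 1) := by
      have hL := L1 (a' + 1) (by omega) b' (by omega) (by omega)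
      omega
    have haa' : a ≤ a' := by
      by_contra h
      have := L2 (a' + 1) (by omega) a (by omega) han hstep1
      omega
    have ea : a' = a := le_antisymm ha'le haa'
    have eb : b' = b := by omega
    subst ea
    subst eb
    rfl
end

section
/- Let M = {1,…,m} and N = {1,…,n} be spirals with left nodes x_M, x_N and right nodes y_M, y_N. Suppose that y_M − x_M ≤ y_N − x_N, that x_M divides x_N (the size of the left circle of M divides the size of the left circle of N), and that m+1−y_M divides n+1−y_N (the size of the right circle of M divides the size of the right circle of N). Then for any a, b with x_N ≤ a < b ≤ y_N and b − a = y_M − x_M, there exists exactly one relation preserving map f: N → M that is onto M and satisfies f(a) = x_M and f(b) = y_M. -/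
private lemma succ_mod {x t : ℕ} (hx : 2 ≤ x) :
    (t + 1) % x = if t % x = x - 1 then 0 else t % x + 1 := by
  have h1 : t % x < x := Nat.mod_lt _ (by omega)
  rw [Nat.add_mod, Nat.mod_eq_of_lt (show 1 < x by omega)]
  split
  · next h => rw [h, show x - 1 + 1 = x by omega, Nat.mod_self]
  · next h => exact Nat.mod_eq_of_lt (by omega)

private lemma dvd_pred_mod {x c : ℕ} (hx : 2 ≤ x) (hc : 0 < c) (hdvd : x ∣ c) :
    (c - 1) % x = x - 1 := by
  obtain ⟨q, rfl⟩ := hdvd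
  rcases q with _ | q'
  · simp at hc
  · have h : x * (q' + 1) = x * q' + x := by ring
    have h2 : x * q' + x - 1 = (x - 1) + x * q' := by
      generalize x * q' = p; omega
    rw [h, h2, Nat.add_mul_mod_self_left]
    exact Nat.mod_eq_of_lt (by omega)

private lemma mod_shift {x c : ℕ} (hx : 2 ≤ x) (hc : 0 < c) (hdvd : x ∣ c) (d : ℕ) :
    (d + (c - 1)) % x = if d % x = 0 then x - 1 else d % x - 1 := by
  have hd : d % x < x := Nat.mod_lt _ (by omega)
  rw [Nat.add_mod, dvd_pred_mod hx hc hdvd]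
  split
  · next h => rw [h, Nat.zero_add]; exact Nat.mod_eq_of_lt (by omega)
  · next h =>
      have h3 : d % x + (x - 1) = (d % x - 1) + x := by omega
      rw [h3, Nat.add_mod_right]
      exact Nat.mod_eq_of_lt (by omega)

/-- The canonical onto map, at the level of natural numbers. -/
def fval (M : SpiralData) (a b i : ℕ) : ℕ :=
  if i < a then M.x - (a - i) % M.x
  else if i ≤ b then M.x + (i - a)
  else M.y + (i - b) % (M.n + 1 - M.y)

private lemma fval_range (M : SpiralData) {a b : ℕ} (hab : a < b)
    (hlen : b - a = M.y - M.x) (i : ℕ) :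
    1 ≤ fval M a b i ∧ fval M a b i ≤ M.n := by
  have h1 := M.one_lt_x; have h2 := M.x_lt_y; have h3 := M.y_lt_n
  unfold fval
  split
  · have := Nat.mod_lt (a - i) (y := M.x) (by omega)
    omega
  · split
    · omega
    · have := Nat.mod_lt (i - b) (y := M.n + 1 - M.y) (by omega)
      omega

private lemma fval_right (M : SpiralData) {a b : ℕ} (hab : a < b)
    (hlen : b - a = M.y - M.x) {i : ℕ} (hi : b ≤ i) :
    fval M a b i = M.y + (i - b) % (M.n + 1 - M.y) := by
  have h2 := M.x_lt_y
  unfold fval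
  rw [if_neg (by omega)]
  rcases eq_or_lt_of_le hi with h | h
  · rw [if_pos (by omega)]
    subst h
    simp
    omega
  · rw [if_neg (by omega)]

private lemma fval_leftc (M : SpiralData) {a b : ℕ} (hab : a < b)
    {i : ℕ} (hi : i ≤ a) :
    fval M a b i = M.x - (a - i) % M.x := by
  unfold fval
  rcases eq_or_lt_of_le hi with h | h
  · rw [if_neg (by omega), if_pos (by omega)]
    subst h
    simp
  · rw [if_pos h]

private lemma fval_relpres (M N : SpiralData)
    (hleft : M.x ∣ N.x) (hright : (M.n + 1 - M.y) ∣ (N.n + 1 - N.y))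
    {a b : ℕ} (ha : N.x ≤ a) (hab : a < b) (hb : b ≤ N.y)
    (hlen : b - a = M.y - M.x) :
    ∀ i j, spiralRelNat N i j → spiralRelNat M (fval M a b i) (fval M a b j) := by
  have hx2 := M.one_lt_x; have hxy := M.x_lt_y; have hyn := M.y_lt_n
  have hNx2 := N.one_lt_x; have hNxy := N.x_lt_y; have hNyn := N.y_lt_n
  have hr2 : 2 ≤ M.n + 1 - M.y := by omega
  intro i j hij
  rcases hij with ⟨hi1, hin, rfl⟩ | ⟨rfl, rfl⟩ | ⟨rfl, rfl⟩
  · -- consecutive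
    rcases lt_or_ge i a with hia | hia
    · -- left circle part
      have hj : fval M a b (i + 1) = M.x - (a - (i + 1)) % M.x :=
        fval_leftc M hab (by omega)
      have hi' : fval M a b i = M.x - (a - i) % M.x := fval_leftc M hab (by omega)
      have hd : a - i = (a - (i + 1)) + 1 := by omega
      rw [hd, succ_mod (by omega)] at hi'
      have hmlt : (a - (i + 1)) % M.x < M.x := Nat.mod_lt _ (by omega)
      obtain ⟨e, he⟩ : ∃ e, (a - (i + 1)) % M.x = e := ⟨_, rfl⟩
      rw [he] at hj hi' hmlt
      unfold spiralRelNat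
      split at hi'
      · next h => rw [h] at hj; right; left; omega
      · next h => left; omega
    · rcases lt_or_ge i b with hib | hib
      · -- middle part
        have hi' : fval M a b i = M.x + (i - a) := by
          unfold fval; rw [if_neg (by omega), if_pos (by omega)]
        have hj : fval M a b (i + 1) = M.x + (i + 1 - a) := by
          unfold fval; rw [if_neg (by omega), if_pos (by omega)]
        unfold spiralRelNat
        left
        omega
      · -- right circle part
        have hi' : fval M a b i = M.y + (i - b) % (M.n + 1 - M.y) :=
          fval_right M hab hlen hib
        have hj : fval M a b (i + 1) = M.y + (i + 1 - b) % (M.n + 1 - M.y) :=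
          fval_right M hab hlen (by omega)
        have hd : i + 1 - b = (i - b) + 1 := by omega
        rw [hd, succ_mod hr2] at hj
        have hmlt : (i - b) % (M.n + 1 - M.y) < (M.n + 1 - M.y) :=
          Nat.mod_lt _ (by omega)
        obtain ⟨e, he⟩ : ∃ e, (i - b) % (M.n + 1 - M.y) = e := ⟨_, rfl⟩
        rw [he] at hj hi' hmlt
        unfold spiralRelNat
        split at hj
        · next h => rw [h] at hi'; right; right; omega
        · next h => left; omega
  · -- (N.x, 1)
    have hi' : fval M a b N.x = M.x - (a - N.x) % M.x := fval_leftc M hab ha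
    have hj : fval M a b 1 = M.x - (a - 1) % M.x := fval_leftc M hab (by omega)
    have hd : a - 1 = (a - N.x) + (N.x - 1) := by omega
    rw [hd, mod_shift (by omega) (by omega) hleft] at hj
    have hmlt : (a - N.x) % M.x < M.x := Nat.mod_lt _ (by omega)
    obtain ⟨e, he⟩ : ∃ e, (a - N.x) % M.x = e := ⟨_, rfl⟩
    rw [he] at hj hi' hmlt
    unfold spiralRelNat
    split at hj
    · next h => rw [h] at hi'; right; left; omega
    · next h => left; omega
  · -- (N.n, N.y)
    have hi' : fval M a b N.n = M.y + (N.n - b) % (M.n + 1 - M.y) :=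
      fval_right M hab hlen (by omega)
    have hj : fval M a b N.y = M.y + (N.y - b) % (M.n + 1 - M.y) :=
      fval_right M hab hlen hb
    have hd : N.n - b = (N.y - b) + ((N.n + 1 - N.y) - 1) := by omega
    rw [hd, mod_shift hr2 (by omega) hright] at hi'
    have hmlt : (N.y - b) % (M.n + 1 - M.y) < (M.n + 1 - M.y) :=
      Nat.mod_lt _ (by omega)
    obtain ⟨e, he⟩ : ∃ e, (N.y - b) % (M.n + 1 - M.y) = e := ⟨_, rfl⟩
    rw [he] at hj hi' hmlt
    unfold spiralRelNat
    split at hi'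
    · next h => rw [h] at hj; right; right; omega
    · next h => left; omega

private lemma fval_surj (M N : SpiralData)
    (hleft : M.x ∣ N.x) (hright : (M.n + 1 - M.y) ∣ (N.n + 1 - N.y))
    {a b : ℕ} (ha : N.x ≤ a) (hab : a < b) (hb : b ≤ N.y)
    (hlen : b - a = M.y - M.x) :
    ∀ v, 1 ≤ v → v ≤ M.n → ∃ i, 1 ≤ i ∧ i ≤ N.n ∧ fval M a b i = v := by
  have hx2 := M.one_lt_x; have hxy := M.x_lt_y; have hyn := M.y_lt_n
  have hNx2 := N.one_lt_x; have hNxy := N.x_lt_y; have hNyn := N.y_lt_n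
  have haM : M.x ≤ a := le_trans (Nat.le_of_dvd (by omega) hleft) ha
  have hbM : b + (M.n - M.y) ≤ N.n := by
    have := Nat.le_of_dvd (by omega) hright
    omega
  intro v hv1 hv2
  rcases lt_or_ge v M.x with hvx | hvx
  · refine ⟨a - (M.x - v), by omega, by omega, ?_⟩
    rw [fval_leftc M hab (by omega), show a - (a - (M.x - v)) = M.x - v by omega,
      Nat.mod_eq_of_lt (by omega)]
    omega
  · rcases le_or_gt v M.y with hvy | hvy
    · refine ⟨a + (v - M.x), by omega, by omega, ?_⟩
      unfold fval
      rw [if_neg (by omega), if_pos (by omega)]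
      omega
    · refine ⟨b + (v - M.y), by omega, by omega, ?_⟩
      rw [fval_right M hab hlen (by omega),
        show b + (v - M.y) - b = v - M.y by omega,
        Nat.mod_eq_of_lt (by omega)]
      omega

private lemma pred_unique (M : SpiralData) {u u' v : ℕ}
    (h : spiralRelNat M u v) (h' : spiralRelNat M u' v) (hv : v ≤ M.x) :
    u = u' := by
  have hx2 := M.one_lt_x; have hxy := M.x_lt_y; have hyn := M.y_lt_n
  unfold spiralRelNat at h h'
  omega

private lemma succ_unique (M : SpiralData) {u v v' : ℕ}
    (h : spiralRelNat M u v) (h' : spiralRelNat M u v') (hu : M.y ≤ u) :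
    v = v' := by
  have hx2 := M.one_lt_x; have hxy := M.x_lt_y; have hyn := M.y_lt_n
  unfold spiralRelNat at h h'
  omega

private lemma succ_bound (M : SpiralData) {u v : ℕ}
    (h : spiralRelNat M u v) : v ≤ u + 1 := by
  have hx2 := M.one_lt_x; have hxy := M.x_lt_y; have hyn := M.y_lt_n
  unfold spiralRelNat at h
  omega

/-- Converse: if `|s_M| ≤ |s_N|`, `|l_M|` divides `|l_N|`, and `|r_M|` divides
`|r_N|`, then for any `a < b` in the middle line of `N` with `b - a = |s_M|`
there is exactly one relation preserving map `f : N → M` onto `M` with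
`f a = x_M` and `f b = y_M`. -/
theorem onto_spiral_map_exists_unique (M N : SpiralData)
    (hmid : M.y - M.x ≤ N.y - N.x)
    (hleft : M.x ∣ N.x) (hright : (M.n + 1 - M.y) ∣ (N.n + 1 - N.y))
    (a b : SpiralCarrier N) (ha : N.x ≤ a.1) (hab : a.1 < b.1) (hb : b.1 ≤ N.y)
    (hlen : b.1 - a.1 = M.y - M.x) :
    ∃! f : SpiralCarrier N → SpiralCarrier M,
      RelPres (spiralRel N) (spiralRel M) f ∧ Function.Surjective f ∧
      f a = leftNode M ∧ f b = rightNode M := by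
  have hx2 := M.one_lt_x; have hxy := M.x_lt_y; have hyn := M.y_lt_n
  have hNx2 := N.one_lt_x; have hNxy := N.x_lt_y; have hNyn := N.y_lt_n
  refine ⟨fun p => ⟨fval M a.1 b.1 p.1, fval_range M hab hlen p.1⟩,
    ⟨?_, ?_, ?_, ?_⟩, ?_⟩
  · -- relation preserving
    intro p q hpq
    exact fval_relpres M N hleft hright ha hab hb hlen p.1 q.1 hpq
  · -- surjective
    intro v
    obtain ⟨i, h1, h2, h3⟩ :=
      fval_surj M N hleft hright ha hab hb hlen v.1 v.2.1 v.2.2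
    exact ⟨⟨i, h1, h2⟩, Subtype.ext h3⟩
  · -- f a = leftNode M
    apply Subtype.ext
    show fval M a.1 b.1 a.1 = M.x
    unfold fval
    rw [if_neg (lt_irrefl a.1), if_pos (le_of_lt hab)]
    omega
  · -- f b = rightNode M
    apply Subtype.ext
    show fval M a.1 b.1 b.1 = M.y
    unfold fval
    rw [if_neg (by omega), if_pos (le_refl b.1)]
    omega
  · -- uniqueness
    rintro g ⟨hgR, hgS, hga, hgb⟩
    set G : ℕ → ℕ := fun i => if h : 1 ≤ i ∧ i ≤ N.n then (g ⟨i, h⟩).1 else 0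
      with hGdef
    have hGval : ∀ (i : ℕ) (h : 1 ≤ i ∧ i ≤ N.n), G i = (g ⟨i, h⟩).1 := by
      intro i h
      simp only [hGdef]
      exact dif_pos h
    have hGrel : ∀ i, 1 ≤ i → i < N.n → spiralRelNat M (G i) (G (i + 1)) := by
      intro i h1 h2
      rw [hGval i ⟨h1, by omega⟩, hGval (i + 1) ⟨by omega, by omega⟩]
      exact hgR _ _ (Or.inl ⟨h1, h2, rfl⟩)
    have hFrel : ∀ i, 1 ≤ i → i < N.n →
        spiralRelNat M (fval M a.1 b.1 i) (fval M a.1 b.1 (i + 1)) :=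
      fun i h1 h2 =>
        fval_relpres M N hleft hright ha hab hb hlen i (i + 1)
          (Or.inl ⟨h1, h2, rfl⟩)
    have hGa : G a.1 = M.x := by
      have h1 : G a.1 = (g a).1 := hGval a.1 a.2
      rw [h1, hga]
      rfl
    have hGb : G b.1 = M.y := by
      have h1 : G b.1 = (g b).1 := hGval b.1 b.2
      rw [h1, hgb]
      rfl
    -- upper bound on the middle line
    have hub : ∀ t, a.1 + t ≤ b.1 → G (a.1 + t) ≤ M.x + t := by
      intro t
      induction t with
      | zero =>
          intro _
          simp only [Nat.add_zero]
          omega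
      | succ t ih =>
          intro h
          have hrel := hGrel (a.1 + t) (by omega) (by omega)
          have hsb := succ_bound M hrel
          have hih := ih (by omega)
          show G (a.1 + t + 1) ≤ M.x + (t + 1)
          omega
    -- equality on the middle line, downward from b
    have hmidl : ∀ s, s ≤ b.1 - a.1 → G (b.1 - s) = M.x + (b.1 - a.1 - s) := by
      intro s
      induction s with
      | zero =>
          intro _
          simp only [Nat.sub_zero]
          omega
      | succ s ih =>
          intro hs
          have hih := ih (by omega)
          have hrel := hGrel (b.1 - (s + 1)) (by omega) (by omega)
          have hstep : b.1 - (s + 1) + 1 = b.1 - s := by omega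
          rw [hstep] at hrel
          have hub' := hub (b.1 - (s + 1) - a.1) (by omega)
          have heq : a.1 + (b.1 - (s + 1) - a.1) = b.1 - (s + 1) := by omega
          rw [heq] at hub'
          unfold spiralRelNat at hrel
          omega
    -- left circle, downward from a
    have hFle : ∀ j, j ≤ a.1 → fval M a.1 b.1 j ≤ M.x := by
      intro j hj
      rw [fval_leftc M hab hj]
      omega
    have hlefts : ∀ s, s < a.1 → G (a.1 - s) = fval M a.1 b.1 (a.1 - s) := by
      intro s
      induction s with
      | zero =>
          intro _
          simp only [Nat.sub_zero]
          rw [hGa, fval_leftc M hab (le_refl _), Nat.sub_self]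
          simp
      | succ s ih =>
          intro hs
          have hih := ih (by omega)
          have hstep : a.1 - (s + 1) + 1 = a.1 - s := by omega
          have hrelG := hGrel (a.1 - (s + 1)) (by omega) (by omega)
          have hrelF := hFrel (a.1 - (s + 1)) (by omega) (by omega)
          rw [hstep] at hrelG hrelF
          rw [hih] at hrelG
          exact pred_unique M hrelG hrelF (hFle _ (by omega))
    -- right circle, upward from b
    have hFge : ∀ j, b.1 ≤ j → M.y ≤ fval M a.1 b.1 j := by
      intro j hj
      rw [fval_right M hab hlen hj]
      omega
    have hrights : ∀ s, b.1 + s ≤ N.n → G (b.1 + s) = fval M a.1 b.1 (b.1 + s) := by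
      intro s
      induction s with
      | zero =>
          intro _
          simp only [Nat.add_zero]
          rw [hGb, fval_right M hab hlen (le_refl _), Nat.sub_self]
          simp
      | succ s ih =>
          intro hs
          have hih := ih (by omega)
          have hrelG := hGrel (b.1 + s) (by omega) (by omega)
          have hrelF := hFrel (b.1 + s) (by omega) (by omega)
          rw [hih] at hrelG
          exact succ_unique M hrelG hrelF (hFge _ (by omega))
    -- conclude
    funext p
    apply Subtype.ext
    have hp1 := p.2.1
    have hp2 := p.2.2
    have hGp : G p.1 = (g p).1 := hGval p.1 p.2
    show (g p).1 = fval M a.1 b.1 p.1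
    rw [← hGp]
    rcases le_or_gt p.1 a.1 with h | h
    · have h1 := hlefts (a.1 - p.1) (by omega)
      rw [show a.1 - (a.1 - p.1) = p.1 by omega] at h1
      exact h1
    · rcases le_or_gt p.1 b.1 with h2 | h2
      · have h3 := hmidl (b.1 - p.1) (by omega)
        rw [show b.1 - (b.1 - p.1) = p.1 by omega] at h3
        rw [h3]
        unfold fval
        rw [if_neg (by omega), if_pos h2]
        omega
      · have h1 := hrights (p.1 - b.1) (by omega)
        rw [show b.1 + (p.1 - b.1) = p.1 by omega] at h1
        exact h1
end

section
/- Let M = {1,…,m} and N = {1,…,n} be spirals with left nodes x_M, x_N and right nodes y_M, y_N. (Forward direction) If f: N → M is a relation preserving map whose image equals the left circle [1,x_M] of M, then there exists c with 1 ≤ c ≤ x_N such that f(c) = x_M. (Converse) If x_M divides x_N and x_M divides n+1−y_N, then for every c with 1 ≤ c ≤ x_N there exists exactly one relation preserving map f: N → M whose image equals the left circle of M and which satisfies f(c) = x_M. -/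
lemma mod_succ_aux (m e : ℕ) (hm : 2 ≤ m) : (e + 1) % m = (e % m + 1) % m := by
  rw [Nat.add_mod, Nat.mod_eq_of_lt (show (1:ℕ) < m from hm)]

lemma spiral_stepA (M : SpiralData) (u v : ℕ) (hu1 : 1 ≤ u) (hu : u ≤ M.x)
    (hv : v ≤ M.x) (h : spiralRelNat M u v) : v = u % M.x + 1 := by
  have hx := M.one_lt_x; have hxy := M.x_lt_y; have hyn := M.y_lt_n
  rcases h with ⟨h1, h2, h3⟩ | ⟨h1, h2⟩ | ⟨h1, h2⟩
  · rw [Nat.mod_eq_of_lt (by omega)]; omega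
  · rw [h1, Nat.mod_self]; omega
  · omega

lemma spiral_stepB (M : SpiralData) (u v : ℕ) (hu1 : 1 ≤ u) (hu : u ≤ M.x)
    (h : v = u % M.x + 1) : spiralRelNat M u v := by
  have hx := M.one_lt_x; have hxy := M.x_lt_y; have hyn := M.y_lt_n
  rcases eq_or_lt_of_le hu with he | hl
  · right; left; refine ⟨he, ?_⟩
    rw [h, he, Nat.mod_self]
  · left; refine ⟨hu1, by omega, ?_⟩
    rw [h, Nat.mod_eq_of_lt hl]

lemma sigma_inj (m u v : ℕ) (hu1 : 1 ≤ u) (hu : u ≤ m) (hv1 : 1 ≤ v) (hv : v ≤ m)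
    (h : u % m + 1 = v % m + 1) : u = v := by
  rcases eq_or_lt_of_le hu with h1 | h1 <;> rcases eq_or_lt_of_le hv with h2 | h2
  · omega
  · rw [h1, Nat.mod_self, Nat.mod_eq_of_lt h2] at h; omega
  · rw [h2, Nat.mod_self, Nat.mod_eq_of_lt h1] at h; omega
  · rw [Nat.mod_eq_of_lt h1, Nat.mod_eq_of_lt h2] at h; omega


/-- Maps onto the left circle of a spiral: a relation preserving map whose image
is the left circle `[1, x_M]` sends some `c` in the left circle of `N` to `x_M`;
conversely, under the divisibility assumptions, each such `c` determines exactly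
one such map. -/
theorem spiral_map_onto_left_circle (M N : SpiralData) :
    (∀ f : SpiralCarrier N → SpiralCarrier M,
      RelPres (spiralRel N) (spiralRel M) f →
      Set.range f = {z : SpiralCarrier M | z.1 ≤ M.x} →
      ∃ c : SpiralCarrier N, c.1 ≤ N.x ∧ f c = leftNode M) ∧
    (M.x ∣ N.x → M.x ∣ (N.n + 1 - N.y) →
      ∀ c : SpiralCarrier N, c.1 ≤ N.x →
        ∃! f : SpiralCarrier N → SpiralCarrier M,
          RelPres (spiralRel N) (spiralRel M) f ∧
          Set.range f = {z : SpiralCarrier M | z.1 ≤ M.x} ∧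
          f c = leftNode M) := by
  constructor
  · intro f hrel hrange
    have hMx := M.one_lt_x; have hMxy := M.x_lt_y; have hMyn := M.y_lt_n
    have hNx := N.one_lt_x; have hNxy := N.x_lt_y; have hNyn := N.y_lt_n
    set m := M.x with hm_def
    have hm : 2 ≤ m := hMx
    have hbd : ∀ i, (f i).1 ≤ m := by
      intro i
      have : f i ∈ Set.range f := ⟨i, rfl⟩
      rw [hrange] at this
      exact this
    set v1 : ℕ := (f ⟨1, by omega⟩).1 with hv1_def
    have hv1a : 1 ≤ v1 := (f ⟨1, by omega⟩).2.1
    have hv1b : v1 ≤ m := hbd _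
    -- value formula along the chain
    have hform : ∀ j (p : 1 ≤ j ∧ j ≤ N.n), (f ⟨j, p⟩).1 = (v1 - 1 + (j - 1)) % m + 1 := by
      intro j
      induction j with
      | zero => intro p; omega
      | succ k ih =>
        intro p
        rcases Nat.eq_zero_or_pos k with hk | hk
        · subst hk
          simp only [Nat.add_sub_cancel, Nat.add_zero]
          rw [Nat.mod_eq_of_lt (by omega)]
          have : (⟨0 + 1, p⟩ : SpiralCarrier N) = ⟨1, by omega⟩ := rfl
          rw [this]; omega
        · have pk : 1 ≤ k ∧ k ≤ N.n := ⟨hk, by omega⟩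
          have hstep : (f ⟨k + 1, p⟩).1 = (f ⟨k, pk⟩).1 % m + 1 := by
            apply spiral_stepA M _ _ (f ⟨k, pk⟩).2.1 (hbd _) (hbd _)
            exact hrel ⟨k, pk⟩ ⟨k + 1, p⟩ (show spiralRelNat N k (k + 1) from Or.inl ⟨hk, by omega, rfl⟩)
          rw [hstep, ih pk, ← mod_succ_aux m _ hm]
          have he : v1 - 1 + (k - 1) + 1 = v1 - 1 + (k + 1 - 1) := by omega
          rw [he]
    -- divisibility m ∣ N.x
    have hwrap : (f ⟨1, by omega⟩).1 = (f ⟨N.x, by omega⟩).1 % m + 1 := by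
      apply spiral_stepA M _ _ (f ⟨N.x, by omega⟩).2.1 (hbd _) (hbd _)
      exact hrel _ _ (Or.inr (Or.inl ⟨rfl, rfl⟩))
    have hNxval : (f ⟨N.x, by omega⟩).1 = (v1 - 1 + (N.x - 1)) % m + 1 := hform N.x ⟨by omega, by omega⟩
    have hkey : (v1 - 1 + N.x) % m = (v1 - 1) % m := by
      rw [hNxval] at hwrap
      rw [← mod_succ_aux m _ hm] at hwrap
      have he : v1 - 1 + (N.x - 1) + 1 = v1 - 1 + N.x := by omega
      rw [he] at hwrap
      rw [Nat.mod_eq_of_lt (show v1 - 1 < m by omega)]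
      omega
    have hdvd : m ∣ N.x := by
      have hmeq : v1 - 1 ≡ v1 - 1 + N.x [MOD m] := hkey.symm
      have := (Nat.modEq_iff_dvd' (Nat.le_add_right _ _)).mp hmeq
      simpa using this
    have hmNx : m ≤ N.x := Nat.le_of_dvd (by omega) hdvd
    -- the element c
    refine ⟨⟨m + 1 - v1, by omega⟩, show m + 1 - v1 ≤ N.x by omega, ?_⟩
    apply Subtype.ext
    show (f _).1 = M.x
    rw [hform (m + 1 - v1) ⟨by omega, by omega⟩]
    have he : v1 - 1 + (m + 1 - v1 - 1) = m - 1 := by omega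
    rw [he, Nat.mod_eq_of_lt (by omega)]
    omega
  · intro hdvd1 hdvd2 c hc
    have hMx := M.one_lt_x; have hMxy := M.x_lt_y; have hMyn := M.y_lt_n
    have hNx := N.one_lt_x; have hNxy := N.x_lt_y; have hNyn := N.y_lt_n
    set m := M.x with hm_def
    have hm : 2 ≤ m := hMx
    have hmNx : m ≤ N.x := Nat.le_of_dvd (by omega) hdvd1
    have hc1 : 1 ≤ c.1 := c.2.1
    have hnm : N.n ≤ m * N.n := Nat.le_mul_of_pos_left N.n (by omega)
    set K : ℕ := m * N.n + m - 1 - c.1 with hK_def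
    have hK : c.1 + K = m * N.n + m - 1 := by omega
    set F : ℕ → ℕ := fun i => (i + K) % m + 1 with hF_def
    have hF1 : ∀ i, 1 ≤ F i := fun i => Nat.le_add_left 1 _
    have hFm : ∀ i, F i ≤ m := by
      intro i
      have := Nat.mod_lt (i + K) (show 0 < m by omega)
      simp only [hF_def]
      omega
    have hFstep : ∀ i, F (i + 1) = F i % m + 1 := by
      intro i
      simp only [hF_def]
      rw [← mod_succ_aux m _ hm]
      have he : i + K + 1 = i + 1 + K := by omega
      rw [he]
    have hFper : ∀ a b, a % m = b % m → F a = F b := by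
      intro a b h
      simp only [hF_def]
      rw [Nat.ModEq.add_right K h]
    have hFc : F c.1 = m := by
      simp only [hF_def]
      rw [hK]
      have he : m * N.n + m - 1 = m * N.n + (m - 1) := by omega
      rw [he, Nat.mul_add_mod, Nat.mod_eq_of_lt (by omega)]
      omega
    have hstepRel : ∀ i, spiralRelNat M (F i) (F (i + 1)) :=
      fun i => spiral_stepB M (F i) (F (i + 1)) (hF1 i) (hFm i) (hFstep i)
    set f : SpiralCarrier N → SpiralCarrier M :=
      fun i => ⟨F i.1, hF1 i.1, le_trans (hFm i.1) (by omega)⟩ with hf_def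
    have hfval : ∀ i, (f i).1 = F i.1 := fun i => rfl
    -- the three properties
    have hrel : RelPres (spiralRel N) (spiralRel M) f := by
      intro a b hab
      show spiralRelNat M (F a.1) (F b.1)
      rcases hab with ⟨h1, h2, h3⟩ | ⟨h1, h2⟩ | ⟨h1, h2⟩
      · rw [h3]; exact hstepRel a.1
      · have hper : F 1 = F (N.x + 1) := by
          apply hFper
          obtain ⟨t, ht⟩ := hdvd1
          rw [ht]
          exact (Nat.mul_add_mod m t 1).symm
        rw [h1, h2, hper]
        exact hstepRel N.x
      · have hper : F N.y = F (N.n + 1) := by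
          apply hFper
          obtain ⟨t, ht⟩ := hdvd2
          have he : N.n + 1 = N.y + m * t := by omega
          rw [he]
          exact (Nat.add_mul_mod_self_left N.y m t).symm
        rw [h1, h2, hper]
        exact hstepRel N.n
    have hrange : Set.range f = {z : SpiralCarrier M | z.1 ≤ M.x} := by
      ext z
      simp only [Set.mem_range, Set.mem_setOf_eq]
      constructor
      · rintro ⟨i, rfl⟩; exact hFm i.1
      · intro hz
        have hz1 : 1 ≤ z.1 := z.2.1
        set r := K % m with hr_def
        have hrlt : r < m := Nat.mod_lt _ (by omega)
        set t := (z.1 - 1 + m - r) % m with ht_def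
        have htlt : t < m := Nat.mod_lt _ (by omega)
        set i : ℕ := if t = 0 then m else t with hi_def
        have hi1 : 1 ≤ i ∧ i ≤ N.n := by
          constructor <;> (simp only [hi_def]; split <;> omega)
        have him : i % m = t := by
          simp only [hi_def]
          split
          · rw [Nat.mod_self]; omega
          · exact Nat.mod_eq_of_lt htlt
        refine ⟨⟨i, hi1⟩, ?_⟩
        apply Subtype.ext
        show F i = z.1
        simp only [hF_def]
        rw [Nat.add_mod, him, ← hr_def, ht_def, Nat.mod_add_mod]
        have he : z.1 - 1 + m - r + r = z.1 - 1 + m := by omega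
        rw [he, Nat.add_mod_right, Nat.mod_eq_of_lt (by omega)]
        omega
    have hfc : f c = leftNode M := by
      apply Subtype.ext
      show F c.1 = M.x
      rw [hFc]
    have hfbd : ∀ i, (f i).1 ≤ m := fun i => hFm i.1
    refine ⟨f, ⟨hrel, hrange, hfc⟩, ?_⟩
    -- uniqueness
    rintro g ⟨hgrel, hgrange, hgc⟩
    have hgbd : ∀ i, (g i).1 ≤ m := by
      intro i
      have : g i ∈ Set.range g := ⟨i, rfl⟩
      rw [hgrange] at this
      exact this
    have hgstep : ∀ j (h1 : 1 ≤ j) (h2 : j < N.n) (p : 1 ≤ j ∧ j ≤ N.n)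
        (q : 1 ≤ j + 1 ∧ j + 1 ≤ N.n), (g ⟨j + 1, q⟩).1 = (g ⟨j, p⟩).1 % m + 1 := by
      intro j h1 h2 p q
      apply spiral_stepA M _ _ (g ⟨j, p⟩).2.1 (hgbd _) (hgbd _)
      exact hgrel ⟨j, p⟩ ⟨j + 1, q⟩ (show spiralRelNat N j (j + 1) from Or.inl ⟨h1, h2, rfl⟩)
    have hfstep : ∀ j (p : 1 ≤ j ∧ j ≤ N.n) (q : 1 ≤ j + 1 ∧ j + 1 ≤ N.n),
        (f ⟨j + 1, q⟩).1 = (f ⟨j, p⟩).1 % m + 1 := by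
      intro j p q
      show F (j + 1) = F j % m + 1
      exact hFstep j
    -- forward agreement
    have hfwd : ∀ d (p : 1 ≤ c.1 + d ∧ c.1 + d ≤ N.n), g ⟨c.1 + d, p⟩ = f ⟨c.1 + d, p⟩ := by
      intro d
      induction d with
      | zero =>
        intro p
        have he : (⟨c.1 + 0, p⟩ : SpiralCarrier N) = c := Subtype.ext (Nat.add_zero _)
        rw [he, hgc, hfc]
      | succ d ih =>
        intro p
        have p' : 1 ≤ c.1 + d ∧ c.1 + d ≤ N.n := ⟨by omega, by omega⟩
        have hg := hgstep (c.1 + d) (by omega) (by omega) p' p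
        have hf := hfstep (c.1 + d) p' p
        apply Subtype.ext
        show (g ⟨c.1 + d + 1, p⟩).1 = (f ⟨c.1 + d + 1, p⟩).1
        rw [hg, hf, ih p']
    -- backward agreement
    have hbwd : ∀ d, d < c.1 → ∀ (p : 1 ≤ c.1 - d ∧ c.1 - d ≤ N.n),
        g ⟨c.1 - d, p⟩ = f ⟨c.1 - d, p⟩ := by
      intro d
      induction d with
      | zero =>
        intro _ p
        have he : (⟨c.1 - 0, p⟩ : SpiralCarrier N) = c := Subtype.ext (show c.1 - 0 = c.1 by omega)
        rw [he, hgc, hfc]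
      | succ d ih =>
        intro hd p
        have hq : 1 ≤ c.1 - d ∧ c.1 - d ≤ N.n := ⟨by omega, by omega⟩
        have hjq : c.1 - (d + 1) + 1 = c.1 - d := by omega
        have hq' : 1 ≤ c.1 - (d + 1) + 1 ∧ c.1 - (d + 1) + 1 ≤ N.n := by omega
        have hg := hgstep (c.1 - (d + 1)) (by omega) (by omega) p hq'
        have hf := hfstep (c.1 - (d + 1)) p hq'
        have hih := ih (by omega) hq
        have heq : (⟨c.1 - (d + 1) + 1, hq'⟩ : SpiralCarrier N) = ⟨c.1 - d, hq⟩ :=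
          Subtype.ext hjq
        rw [heq] at hg hf
        rw [hih] at hg
        apply Subtype.ext
        exact sigma_inj m _ _ (g ⟨c.1 - (d+1), p⟩).2.1 (hgbd _) (f ⟨c.1 - (d+1), p⟩).2.1 (hfbd _) (by rw [← hg, ← hf])
    -- conclude
    funext i
    rcases le_or_gt c.1 i.1 with h | h
    · have he : i = ⟨c.1 + (i.1 - c.1), by obtain ⟨a, b⟩ := i.2; omega⟩ :=
        Subtype.ext (show i.1 = c.1 + (i.1 - c.1) by omega)
      rw [he]
      exact hfwd _ _
    · have he : i = ⟨c.1 - (c.1 - i.1), by obtain ⟨a, b⟩ := i.2; omega⟩ :=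
        Subtype.ext (show i.1 = c.1 - (c.1 - i.1) by omega)
      rw [he]
      exact hbwd _ (by obtain ⟨a, b⟩ := i.2; omega) _
end

section
/- Let M = {1,…,m} and N = {1,…,n} be spirals with left nodes x_M, x_N and right nodes y_M, y_N. (Forward direction) If f: N → M is a relation preserving map whose image equals the right circle [y_M,m] of M, then there exists d with y_N ≤ d ≤ n such that f(d) = y_M. (Converse) If m+1−y_M divides n+1−y_N and m+1−y_M divides x_N, then for every d with y_N ≤ d ≤ n there exists exactly one relation preserving map f: N → M whose image equals the right circle of M and which satisfies f(d) = y_M. -/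
private lemma mod_succ_eq (L t : ℕ) (hL : 2 ≤ L) :
    (t + 1) % L = if t % L = L - 1 then 0 else t % L + 1 := by
  have h1 : (1 : ℕ) % L = 1 := Nat.mod_eq_of_lt (by omega)
  have ht : t % L < L := Nat.mod_lt _ (by omega)
  rw [Nat.add_mod, h1]
  split
  · rename_i h
    rw [h, show L - 1 + 1 = L by omega, Nat.mod_self]
  · rename_i h
    exact Nat.mod_eq_of_lt (by omega)

private lemma stepRel (M : SpiralData) (p q : ℕ)
    (h : q % (M.n + 1 - M.y) = (p + 1) % (M.n + 1 - M.y)) :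
    spiralRelNat M (M.y + p % (M.n + 1 - M.y)) (M.y + q % (M.n + 1 - M.y)) := by
  have hMx := M.one_lt_x; have hMxy := M.x_lt_y; have hMyn := M.y_lt_n
  have hL : 2 ≤ M.n + 1 - M.y := by omega
  have hp : p % (M.n + 1 - M.y) < M.n + 1 - M.y := Nat.mod_lt _ (by omega)
  rw [h, mod_succ_eq _ p hL]
  by_cases hc : p % (M.n + 1 - M.y) = M.n + 1 - M.y - 1
  · rw [if_pos hc]
    exact Or.inr (Or.inr ⟨by omega, by omega⟩)
  · rw [if_neg hc]
    exact Or.inl ⟨by omega, by omega, by omega⟩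

private lemma key_formula (M N : SpiralData) (f : SpiralCarrier N → SpiralCarrier M)
    (hf : RelPres (spiralRel N) (spiralRel M) f)
    (hr : ∀ i, M.y ≤ (f i).1)
    (i1 : SpiralCarrier N) (hi1 : i1.1 = 1) (i : SpiralCarrier N) :
    (f i).1 = M.y + (((f i1).1 - M.y) + (i.1 - 1)) % (M.n + 1 - M.y) := by
  have hMx := M.one_lt_x; have hMxy := M.x_lt_y; have hMyn := M.y_lt_n
  have hL : 2 ≤ M.n + 1 - M.y := by omega
  suffices h : ∀ v (h1 : 1 ≤ v) (h2 : v ≤ N.n),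
      (f ⟨v, h1, h2⟩).1
        = M.y + (((f i1).1 - M.y) + (v - 1)) % (M.n + 1 - M.y) by
    exact h i.1 i.2.1 i.2.2
  intro v
  induction v with
  | zero => intro h1 h2; exact absurd h1 (by omega)
  | succ j ih =>
    intro h1 h2
    rcases Nat.eq_zero_or_pos j with hj | hj
    · subst hj
      have e : (⟨0 + 1, h1, h2⟩ : SpiralCarrier N) = i1 :=
        Subtype.ext (show (0 + 1 : ℕ) = i1.1 by omega)
      rw [e]
      have h3 := hr i1
      have h4 := (f i1).2.2
      have h5 : ((f i1).1 - M.y + (0 + 1 - 1)) % (M.n + 1 - M.y)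
          = (f i1).1 - M.y := by
        simp only [Nat.add_sub_cancel, Nat.add_zero]
        exact Nat.mod_eq_of_lt (by omega)
      omega
    · have hj1 : 1 ≤ j := hj
      have hjn : j ≤ N.n := by omega
      have hNrel : spiralRelNat N j (j + 1) := Or.inl ⟨by omega, by omega, rfl⟩
      have hrel : spiralRelNat M (f ⟨j, hj1, hjn⟩).1 (f ⟨j + 1, h1, h2⟩).1 :=
        hf ⟨j, hj1, hjn⟩ ⟨j + 1, h1, h2⟩ hNrel
      have IH := ih hj1 hjn
      have hu1 := hr ⟨j, hj1, hjn⟩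
      have hu2 := (f ⟨j, hj1, hjn⟩).2.2
      have hv1 := hr ⟨j + 1, h1, h2⟩
      have hrlt : ((f i1).1 - M.y + (j - 1)) % (M.n + 1 - M.y) < M.n + 1 - M.y :=
        Nat.mod_lt _ (by omega)
      have harg : (f i1).1 - M.y + (j + 1 - 1)
          = ((f i1).1 - M.y + (j - 1)) + 1 := by omega
      rw [harg, mod_succ_eq _ _ hL]
      rcases hrel with ⟨_, hun, hv⟩ | ⟨hux, _⟩ | ⟨hun, hv⟩
      · rw [if_neg (by omega)]
        omega
      · exact absurd hux (by omega)
      · rw [if_pos (by omega)]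
        omega

/-- Maps onto the right circle of a spiral: a relation preserving map whose
image is the right circle `[y_M, m]` sends some `d` in the right circle of `N`
to `y_M`; conversely, under the divisibility assumptions, each such `d`
determines exactly one such map. -/
theorem spiral_map_onto_right_circle (M N : SpiralData) :
    (∀ f : SpiralCarrier N → SpiralCarrier M,
      RelPres (spiralRel N) (spiralRel M) f →
      Set.range f = {z : SpiralCarrier M | M.y ≤ z.1} →
      ∃ d : SpiralCarrier N, N.y ≤ d.1 ∧ f d = rightNode M) ∧
    ((M.n + 1 - M.y) ∣ (N.n + 1 - N.y) → (M.n + 1 - M.y) ∣ N.x →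
      ∀ d : SpiralCarrier N, N.y ≤ d.1 →
        ∃! f : SpiralCarrier N → SpiralCarrier M,
          RelPres (spiralRel N) (spiralRel M) f ∧
          Set.range f = {z : SpiralCarrier M | M.y ≤ z.1} ∧
          f d = rightNode M) := by
  constructor
  · intro f hf hrange
    have hMx := M.one_lt_x; have hMxy := M.x_lt_y; have hMyn := M.y_lt_n
    have hNx := N.one_lt_x; have hNxy := N.x_lt_y; have hNyn := N.y_lt_n
    have hr : ∀ i, M.y ≤ (f i).1 := by
      intro i
      have h := Set.mem_range_self (f := f) i
      rw [hrange] at h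
      exact h
    have hL : 2 ≤ M.n + 1 - M.y := by omega
    have p1 : (1 : ℕ) ≤ 1 ∧ 1 ≤ N.n := ⟨le_refl 1, by omega⟩
    have pn : 1 ≤ N.n ∧ N.n ≤ N.n := ⟨by omega, le_refl _⟩
    have py : 1 ≤ N.y ∧ N.y ≤ N.n := ⟨by omega, by omega⟩
    have hfn : (f ⟨N.n, pn⟩).1
        = M.y + ((f ⟨1, p1⟩).1 - M.y + (N.n - 1)) % (M.n + 1 - M.y) :=
      key_formula M N f hf hr ⟨1, p1⟩ rfl ⟨N.n, pn⟩
    have hfy : (f ⟨N.y, py⟩).1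
        = M.y + ((f ⟨1, p1⟩).1 - M.y + (N.y - 1)) % (M.n + 1 - M.y) :=
      key_formula M N f hf hr ⟨1, p1⟩ rfl ⟨N.y, py⟩
    have hNrel : spiralRelNat N N.n N.y := Or.inr (Or.inr ⟨rfl, rfl⟩)
    have hrel : spiralRelNat M (f ⟨N.n, pn⟩).1 (f ⟨N.y, py⟩).1 :=
      hf ⟨N.n, pn⟩ ⟨N.y, py⟩ hNrel
    have hv1 := hr ⟨N.y, py⟩
    have hu1 := hr ⟨N.n, pn⟩
    have hu2 := (f ⟨N.n, pn⟩).2.2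
    have hv2 := (f ⟨N.y, py⟩).2.2
    have hrlt : ((f ⟨1, p1⟩).1 - M.y + (N.n - 1)) % (M.n + 1 - M.y) < M.n + 1 - M.y :=
      Nat.mod_lt _ (by omega)
    have hstep : ((f ⟨1, p1⟩).1 - M.y + (N.y - 1)) % (M.n + 1 - M.y)
        = (((f ⟨1, p1⟩).1 - M.y + (N.n - 1)) + 1) % (M.n + 1 - M.y) := by
      rw [mod_succ_eq _ _ hL]
      rcases hrel with ⟨_, hun, hv⟩ | ⟨hux, _⟩ | ⟨hun, hv⟩
      · rw [if_neg (by omega)]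
        omega
      · exact absurd hux (by omega)
      · rw [if_pos (by omega)]
        omega
    have hmod : ((f ⟨1, p1⟩).1 - M.y + (N.y - 1)) % (M.n + 1 - M.y)
        = ((f ⟨1, p1⟩).1 - M.y + N.n) % (M.n + 1 - M.y) := by
      rw [hstep]
      congr 1
      omega
    have hdvd : (M.n + 1 - M.y) ∣ (N.n + 1 - N.y) := by
      have h' := (Nat.modEq_iff_dvd'
        (show (f ⟨1, p1⟩).1 - M.y + (N.y - 1) ≤ (f ⟨1, p1⟩).1 - M.y + N.n by omega)).mp hmod
      have e : ((f ⟨1, p1⟩).1 - M.y + N.n) - ((f ⟨1, p1⟩).1 - M.y + (N.y - 1))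
          = N.n + 1 - N.y := by omega
      rwa [e] at h'
    have hLle : M.n + 1 - M.y ≤ N.n + 1 - N.y := Nat.le_of_dvd (by omega) hdvd
    set r := ((f ⟨1, p1⟩).1 - M.y + (N.y - 1)) % (M.n + 1 - M.y) with hrdef
    have hrlt2 : r < M.n + 1 - M.y := Nat.mod_lt _ (by omega)
    have hm1 : ((M.n + 1 - M.y) - r) % (M.n + 1 - M.y) < M.n + 1 - M.y :=
      Nat.mod_lt _ (by omega)
    have pd : 1 ≤ N.y + ((M.n + 1 - M.y) - r) % (M.n + 1 - M.y)
        ∧ N.y + ((M.n + 1 - M.y) - r) % (M.n + 1 - M.y) ≤ N.n := ⟨by omega, by omega⟩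
    refine ⟨⟨N.y + ((M.n + 1 - M.y) - r) % (M.n + 1 - M.y), pd⟩, Nat.le_add_right _ _, ?_⟩
    have hfd : (f ⟨N.y + ((M.n + 1 - M.y) - r) % (M.n + 1 - M.y), pd⟩).1
        = M.y + ((f ⟨1, p1⟩).1 - M.y
          + ((N.y + ((M.n + 1 - M.y) - r) % (M.n + 1 - M.y)) - 1)) % (M.n + 1 - M.y) :=
      key_formula M N f hf hr ⟨1, p1⟩ rfl
        ⟨N.y + ((M.n + 1 - M.y) - r) % (M.n + 1 - M.y), pd⟩
    have hzero : ((f ⟨1, p1⟩).1 - M.y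
        + ((N.y + ((M.n + 1 - M.y) - r) % (M.n + 1 - M.y)) - 1)) % (M.n + 1 - M.y) = 0 := by
      rw [show (f ⟨1, p1⟩).1 - M.y + ((N.y + ((M.n + 1 - M.y) - r) % (M.n + 1 - M.y)) - 1)
          = ((f ⟨1, p1⟩).1 - M.y + (N.y - 1)) + ((M.n + 1 - M.y) - r) % (M.n + 1 - M.y)
        from by omega]
      rw [← Nat.mod_add_mod, ← hrdef]
      by_cases hr0 : r = 0
      · rw [hr0]
        simp
      · rw [Nat.mod_eq_of_lt (show (M.n + 1 - M.y) - r < M.n + 1 - M.y by omega),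
          show r + ((M.n + 1 - M.y) - r) = M.n + 1 - M.y by omega, Nat.mod_self]
    apply Subtype.ext
    rw [hfd, hzero]
    rfl
  · intro hnd hx d hd
    have hMx := M.one_lt_x; have hMxy := M.x_lt_y; have hMyn := M.y_lt_n
    have hNx := N.one_lt_x; have hNxy := N.x_lt_y; have hNyn := N.y_lt_n
    have hL : 2 ≤ M.n + 1 - M.y := by omega
    have hd1 := d.2.1
    have hLn : M.n + 1 - M.y ≤ N.n := by
      have h1 : M.n + 1 - M.y ≤ N.n + 1 - N.y := Nat.le_of_dvd (by omega) hnd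
      omega
    have hsplit : M.n + 1 - M.y = (M.n - M.y) + 1 := by omega
    have pf : ∀ i : SpiralCarrier N,
        1 ≤ M.y + (i.1 + (M.n - M.y) * d.1) % (M.n + 1 - M.y) ∧
        M.y + (i.1 + (M.n - M.y) * d.1) % (M.n + 1 - M.y) ≤ M.n := by
      intro i
      have := Nat.mod_lt (i.1 + (M.n - M.y) * d.1) (y := M.n + 1 - M.y) (by omega)
      omega
    refine ⟨fun i => ⟨M.y + (i.1 + (M.n - M.y) * d.1) % (M.n + 1 - M.y), pf i⟩,
      ⟨?_, ?_, ?_⟩, ?_⟩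
    · -- relation preserving
      intro a b hab
      refine stepRel M (a.1 + (M.n - M.y) * d.1) (b.1 + (M.n - M.y) * d.1) ?_
      rcases hab with ⟨h1, h2, h3⟩ | ⟨h1, h2⟩ | ⟨h1, h2⟩
      · rw [h3]
        congr 1
        omega
      · obtain ⟨e, he⟩ := hx
        rw [h1, h2,
          show N.x + (M.n - M.y) * d.1 + 1
            = 1 + (M.n - M.y) * d.1 + (M.n + 1 - M.y) * e from by omega,
          Nat.add_mul_mod_self_left]
      · obtain ⟨e, he⟩ := hnd
        rw [h1, h2,
          show N.n + (M.n - M.y) * d.1 + 1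
            = N.y + (M.n - M.y) * d.1 + (M.n + 1 - M.y) * e from by omega,
          Nat.add_mul_mod_self_left]
    · -- range
      apply Set.eq_of_subset_of_subset
      · rintro z ⟨i, rfl⟩
        simp only [Set.mem_setOf_eq]
        exact Nat.le_add_right _ _
      · intro z hz
        simp only [Set.mem_setOf_eq] at hz
        have hz2 := z.2.2
        have ht : (z.1 - M.y + (M.n - M.y) * ((M.n - M.y) * d.1) + (M.n - M.y))
            % (M.n + 1 - M.y) < M.n + 1 - M.y := Nat.mod_lt _ (by omega)
        have pi : 1 ≤ (z.1 - M.y + (M.n - M.y) * ((M.n - M.y) * d.1) + (M.n - M.y))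
              % (M.n + 1 - M.y) + 1 ∧
            (z.1 - M.y + (M.n - M.y) * ((M.n - M.y) * d.1) + (M.n - M.y))
              % (M.n + 1 - M.y) + 1 ≤ N.n := ⟨by omega, by omega⟩
        refine ⟨⟨(z.1 - M.y + (M.n - M.y) * ((M.n - M.y) * d.1) + (M.n - M.y))
          % (M.n + 1 - M.y) + 1, pi⟩, ?_⟩
        apply Subtype.ext
        show M.y + ((z.1 - M.y + (M.n - M.y) * ((M.n - M.y) * d.1) + (M.n - M.y))
            % (M.n + 1 - M.y) + 1 + (M.n - M.y) * d.1) % (M.n + 1 - M.y) = z.1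
        have key : ((z.1 - M.y + (M.n - M.y) * ((M.n - M.y) * d.1) + (M.n - M.y))
            % (M.n + 1 - M.y) + 1 + (M.n - M.y) * d.1) % (M.n + 1 - M.y)
            = z.1 - M.y := by
          rw [show (z.1 - M.y + (M.n - M.y) * ((M.n - M.y) * d.1) + (M.n - M.y))
                % (M.n + 1 - M.y) + 1 + (M.n - M.y) * d.1
              = (z.1 - M.y + (M.n - M.y) * ((M.n - M.y) * d.1) + (M.n - M.y))
                % (M.n + 1 - M.y) + (1 + (M.n - M.y) * d.1) from by omega,
            Nat.mod_add_mod]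
          have hk : (M.n + 1 - M.y) * ((M.n - M.y) * d.1 + 1)
              = (M.n - M.y) * ((M.n - M.y) * d.1) + (M.n - M.y) * d.1
                + (M.n - M.y) + 1 := by
            rw [hsplit]; ring
          rw [show z.1 - M.y + (M.n - M.y) * ((M.n - M.y) * d.1) + (M.n - M.y)
                + (1 + (M.n - M.y) * d.1)
              = (z.1 - M.y) + (M.n + 1 - M.y) * ((M.n - M.y) * d.1 + 1) from by omega,
            Nat.add_mul_mod_self_left]
          exact Nat.mod_eq_of_lt (by omega)
        rw [key]
        omega
    · -- f d = rightNode M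
      apply Subtype.ext
      show M.y + (d.1 + (M.n - M.y) * d.1) % (M.n + 1 - M.y) = M.y
      have hk : d.1 + (M.n - M.y) * d.1 = (M.n + 1 - M.y) * d.1 := by
        rw [hsplit]; ring
      rw [hk, Nat.mul_mod_right]
      omega
    · -- uniqueness
      intro g ⟨hg1, hg2, hg3⟩
      have hrg : ∀ i, M.y ≤ (g i).1 := by
        intro i
        have h := Set.mem_range_self (f := g) i
        rw [hg2] at h
        exact h
      have p1 : (1 : ℕ) ≤ 1 ∧ 1 ≤ N.n := ⟨le_refl 1, by omega⟩
      have hgd : (g d).1 = M.y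
          + ((g ⟨1, p1⟩).1 - M.y + (d.1 - 1)) % (M.n + 1 - M.y) :=
        key_formula M N g hg1 hrg ⟨1, p1⟩ rfl d
      have h4 : (g d).1 = M.y := congrArg Subtype.val hg3
      have hz : ((g ⟨1, p1⟩).1 - M.y + (d.1 - 1)) % (M.n + 1 - M.y) = 0 := by omega
      obtain ⟨q, hq⟩ := Nat.dvd_of_mod_eq_zero hz
      funext i
      have hgi : (g i).1 = M.y
          + ((g ⟨1, p1⟩).1 - M.y + (i.1 - 1)) % (M.n + 1 - M.y) :=
        key_formula M N g hg1 hrg ⟨1, p1⟩ rfl i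
      have hi1 := i.2.1
      apply Subtype.ext
      show (g i).1 = M.y + (i.1 + (M.n - M.y) * d.1) % (M.n + 1 - M.y)
      rw [hgi]
      congr 1
      have hk2 : (M.n + 1 - M.y) * d.1 = (M.n - M.y) * d.1 + d.1 := by
        rw [hsplit]; ring
      calc ((g ⟨1, p1⟩).1 - M.y + (i.1 - 1)) % (M.n + 1 - M.y)
          = ((g ⟨1, p1⟩).1 - M.y + (i.1 - 1) + (M.n + 1 - M.y) * d.1)
              % (M.n + 1 - M.y) := (Nat.add_mul_mod_self_left _ _ _).symm
        _ = (i.1 + (M.n - M.y) * d.1 + (M.n + 1 - M.y) * q)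
              % (M.n + 1 - M.y) := by
            rw [show (g ⟨1, p1⟩).1 - M.y + (i.1 - 1) + (M.n + 1 - M.y) * d.1
                = i.1 + (M.n - M.y) * d.1 + (M.n + 1 - M.y) * q from by omega]
        _ = (i.1 + (M.n - M.y) * d.1) % (M.n + 1 - M.y) :=
            Nat.add_mul_mod_self_left _ _ _
end

section
/- Let A be a finite nonempty set equipped with binary relations s₁,…,s_m. Then the set U_A of all tuples (f₁,…,f_m) ∈ H(2^ℕ)^m for which there exists a continuous surjection g: 2^ℕ → A (A discrete) such that for every i and all a, b ∈ A: sᵢ(a,b) holds if and only if there exists x ∈ 2^ℕ with g(x) = a and g(fᵢ(x)) = b, is open in H(2^ℕ)^m. -/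
/-- The Cantor space `2^ℕ`. -/
abbrev Cantor : Type := ℕ → Bool

/-- The group of self-homeomorphisms of the Cantor space. -/
abbrev H : Type := Cantor ≃ₜ Cantor

/-- Group structure on `H(2^ℕ)`: multiplication is composition. -/
instance : Group H where
  mul f g := g.trans f
  one := Homeomorph.refl Cantor
  inv := Homeomorph.symm
  mul_assoc _ _ _ := rfl
  one_mul _ := Homeomorph.ext fun _ => rfl
  mul_one _ := Homeomorph.ext fun _ => rfl
  inv_mul_cancel := Homeomorph.self_trans_symm

/-- The compact-open topology on `H(2^ℕ)`, induced from `C(2^ℕ, 2^ℕ)`. -/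
instance : TopologicalSpace H :=
  TopologicalSpace.induced (fun f : H => (f : C(Cantor, Cantor)))
    ContinuousMap.compactOpen

lemma isOpen_sameImage {A : Type} [Fintype A] [TopologicalSpace A]
    [DiscreteTopology A] (g c : Cantor → A) (hg : Continuous g) (hc : Continuous c) :
    IsOpen {h : C(Cantor, Cantor) | ∀ x, g (h x) = c x} := by
  have : {h : C(Cantor, Cantor) | ∀ x, g (h x) = c x}
      = ⋂ a : A, {h : C(Cantor, Cantor) | Set.MapsTo h (c ⁻¹' {a}) (g ⁻¹' {a})} := by
    ext h
    simp only [Set.mem_setOf_eq, Set.mem_iInter, Set.MapsTo, Set.mem_preimage,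
      Set.mem_singleton_iff]
    constructor
    · intro H a x hx; rw [H x, hx]
    · intro H x; exact H (c x) rfl
  rw [this]
  refine isOpen_iInter_of_finite fun a => ?_
  exact ContinuousMap.isOpen_setOf_mapsTo
    ((isClosed_singleton.preimage hc).isCompact) (isOpen_discrete _ |>.preimage hg)

/-- For a finite nonempty set `A` (discrete) with binary relations `s₁, …, s_m`,
the set `U_A` of tuples `(f₁, …, f_m)` that admit an epimorphism
`g : 2^ℕ → A` onto `(A, s₁, …, s_m)` is open in `H(2^ℕ)^m`. -/
theorem exists_epi_onto_open {m : ℕ} {A : Type} [Fintype A] [Nonempty A]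
    [TopologicalSpace A] [DiscreteTopology A] (s : Fin m → A → A → Prop) :
    IsOpen {f : Fin m → H | ∃ g : Cantor → A, Continuous g ∧
      Function.Surjective g ∧
      ∀ i a b, s i a b ↔ ∃ x : Cantor, g x = a ∧ g ((f i) x) = b} := by
  rw [isOpen_iff_forall_mem_open]
  rintro f ⟨g, hgc, hgs, hiff⟩
  refine ⟨{f' : Fin m → H | ∀ i x, g ((f' i) x) = g ((f i) x)}, ?_, ?_, ?_⟩
  · rintro f' hf'
    refine ⟨g, hgc, hgs, fun i a b => ?_⟩
    rw [hiff i a b]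
    constructor
    · rintro ⟨x, hx1, hx2⟩; exact ⟨x, hx1, (hf' i x).trans hx2⟩
    · rintro ⟨x, hx1, hx2⟩; exact ⟨x, hx1, ((hf' i x).symm).trans hx2⟩
  · have : {f' : Fin m → H | ∀ i x, g ((f' i) x) = g ((f i) x)}
        = ⋂ i : Fin m, (fun f' : Fin m → H => f' i) ⁻¹'
          ((fun h : H => (h : C(Cantor, Cantor))) ⁻¹'
            {h : C(Cantor, Cantor) | ∀ x, g (h x) = g ((f i) x)}) := by
      ext f'
      simp [Set.mem_iInter]
    rw [this]
    refine isOpen_iInter_of_finite fun i => ?_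
    refine (continuous_apply i).isOpen_preimage _ ?_
    refine IsOpen.preimage continuous_induced_dom ?_
    exact isOpen_sameImage g (fun x => g ((f i) x)) hgc
      (hgc.comp (f i).continuous)
  · intro i x; rfl
end

section
/- For every positive integer m, there exists a tuple (f₁,…,f_m) ∈ H(2^ℕ)^m whose orbit under the diagonal conjugacy action, namely {(g f₁ g⁻¹,…,g f_m g⁻¹) : g ∈ H(2^ℕ)}, is dense in H(2^ℕ)^m. -/
/-!
A basic neighbourhood of `u ∈ H(2^ℕ)` consists of the `h` whose outputs agree with those of `u`
in the first `n` bits. Whether `g f g⁻¹` lies in it is governed by the level-`n` pattern of `u`,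
the finite set of values of `z ↦ (z|n, (uᵢ z)|n)`. If `f` factors onto a tuple `v` with the same
pattern through a continuous surjection `ρ`, the labels of `u` and of `v ∘ ρ` are locally constant
maps with the same range; as every nonempty clopen subset of `2^ℕ` is homeomorphic to `2^ℕ`, some
`g` carries the fibres of one onto those of the other, and then `g f g⁻¹` is `n`-close to `u`.
There are only countably many patterns, so letting `f` act on `2^ℕ ≅ (2^ℕ)^ℕ` by a realisation of
the `k`-th pattern on the `k`-th factor gives a tuple whose orbit meets every such neighbourhood.
-/

open Set Filter Topology Uniformity

theorem hasBasis_uniformity_nat_eqOn_Iio {α : Type*} [UniformSpace α] [DiscreteUniformity α] :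
    (𝓤 (ℕ → α)).HasBasis (fun _ => True) fun n => {p | EqOn p.1 p.2 (Iio n)} := by
  simp only [Pi.uniformity, DiscreteUniformity.eq_principal_setRelId, comap_principal]
  refine (hasBasis_iInf_principal_finite _).to_hasBasis (fun t ht => ?_) fun n _ =>
    ⟨Iio n, finite_Iio n, fun p hp j hj => mem_iInter₂.1 hp j hj⟩
  obtain ⟨n, hn⟩ := ht.bddAbove
  exact ⟨n + 1, trivial, fun p hp => mem_iInter₂.2 fun j hj => hp (Nat.lt_succ_of_le (hn hj))⟩

theorem ContinuousMap.hasBasis_nhds_eqOn_Iio {X α : Type*} [TopologicalSpace X] [CompactSpace X]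
    [UniformSpace α] [DiscreteUniformity α] (f : C(X, ℕ → α)) :
    (𝓝 f).HasBasis (fun _ => True) fun n => {g | ∀ x, EqOn (f x) (g x) (Iio n)} :=
  nhds_basis_uniformity' hasBasis_uniformity_nat_eqOn_Iio.compactConvergenceUniformity_of_compact

def Homeomorph.sigmaCongrRight {ι : Type*} {X Y : ι → Type*} [∀ i, TopologicalSpace (X i)]
    [∀ i, TopologicalSpace (Y i)] (e : ∀ i, X i ≃ₜ Y i) : (Σ i, X i) ≃ₜ Σ i, Y i where
  toEquiv := Equiv.sigmaCongrRight fun i => (e i).toEquiv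
  continuous_toFun := continuous_sigma fun i => continuous_sigmaMk.comp (e i).continuous
  continuous_invFun := continuous_sigma fun i => continuous_sigmaMk.comp (e i).symm.continuous

def Homeomorph.sigmaFiber {X L : Type*} [TopologicalSpace X] [TopologicalSpace L]
    [DiscreteTopology L] {f : X → L} (hf : Continuous f) : (Σ q, {x // f x = q}) ≃ₜ X :=
  (Equiv.sigmaFiberEquiv f).toHomeomorphOfContinuousOpen
    (continuous_sigma fun _ => continuous_subtype_val)
    (isOpenMap_sigma.2 fun q => ((isOpen_discrete {q}).preimage hf).isOpenMap_subtype_val)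

theorem H.hasBasis_nhds (u : H) :
    (𝓝 u).HasBasis (fun _ => True) fun n => {h : H | ∀ z, EqOn (u z) (h z) (Iio n)} := by
  rw [nhds_induced]
  exact (ContinuousMap.hasBasis_nhds_eqOn_Iio _).comap _

theorem dense_of_forall_eqOn_Iio {ι : Type*} {D : Set (ι → H)}
    (hD : ∀ (u : ι → H) (n : ℕ), ∃ x ∈ D, ∀ i z, EqOn (u i z) (x i z) (Iio n)) : Dense D := by
  have hbasis (u : ι → H) := hasBasis_pi_same_index (fun i => H.hasBasis_nhds (u i))
    fun I k hI _ => ⟨hI.toFinset.sup k, trivial, fun i hi _ hh z j hj =>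
      hh z (mem_Iio.2 (lt_of_lt_of_le hj (Finset.le_sup (hI.mem_toFinset.2 hi))))⟩
  refine fun u => mem_closure_iff_nhds.2 fun s hs => ?_
  rw [nhds_pi] at hs
  obtain ⟨⟨I, n⟩, -, hsub⟩ := (hbasis u).mem_iff.1 hs
  obtain ⟨x, hxD, hx⟩ := hD u n
  exact ⟨x, hsub fun i _ => hx i, hxD⟩

namespace Cantor

theorem exists_eqOn_Iio_imp_eq {L : Type*} [TopologicalSpace L] [DiscreteTopology L]
    {f : Cantor → L} (hf : Continuous f) : ∃ N, ∀ x y, EqOn x y (Iio N) → f x = f y := by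
  obtain ⟨V, hV, hVf⟩ := lebesgue_number_lemma (U := fun q : L => f ⁻¹' {q}) isCompact_univ
    (fun q => (isOpen_discrete _).preimage hf) fun x _ => mem_iUnion.2 ⟨f x, rfl⟩
  obtain ⟨N, -, hN⟩ := (hasBasis_uniformity_nat_eqOn_Iio (α := Bool)).mem_iff.1 hV
  refine ⟨N, fun x y hxy => ?_⟩
  obtain ⟨q, hq⟩ := hVf x (mem_univ x)
  exact (hq (refl_mem_uniformity hV)).trans (hq (hN hxy)).symm

def splitAt (N : ℕ) : Cantor ≃ₜ (Fin N → Bool) × Cantor :=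
  (Homeomorph.piCongrLeft (Y := fun _ => Bool) (finSumNatEquiv N)).symm.trans
    Homeomorph.sumArrowHomeomorphProdArrow

theorem splitAt_fst (N : ℕ) (x : Cantor) : (splitAt N x).1 = fun j : Fin N => x j := rfl

theorem nonempty_homeomorph_fin_succ_prod (k : ℕ) :
    Nonempty (Fin (k + 1) × Cantor ≃ₜ Cantor) := by
  have finAddProd (a b : ℕ) : Fin (a + b) × Cantor ≃ₜ Fin a × Cantor ⊕ Fin b × Cantor :=
    (finSumFinEquiv.symm.toHomeomorphOfDiscrete.prodCongr (.refl _)).trans .sumProdDistrib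
  have cantorEquivSum : Cantor ≃ₜ Cantor ⊕ Cantor :=
    (splitAt 1).trans <|
      (((Equiv.funUnique (Fin 1) Bool).trans finTwoEquiv.symm).toHomeomorphOfDiscrete.prodCongr
        (.refl _)).trans <|
      (finAddProd 1 1).trans ((Homeomorph.uniqueProd _ _).sumCongr (.uniqueProd _ _))
  induction k with
  | zero => exact ⟨.uniqueProd (Fin 1) _⟩
  | succ k ih =>
    exact ⟨(finAddProd (k + 1) 1).trans
      ((ih.some.sumCongr (.uniqueProd _ _)).trans cantorEquivSum.symm)⟩

theorem nonempty_homeomorph_prod (S : Type*) [TopologicalSpace S] [DiscreteTopology S]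
    [Finite S] [Nonempty S] : Nonempty (S × Cantor ≃ₜ Cantor) := by
  obtain ⟨k, hk⟩ := Nat.exists_eq_succ_of_ne_zero (Nat.card_pos (α := S)).ne'
  exact ⟨(((Finite.equivFin S).trans (finCongr hk)).toHomeomorphOfDiscrete.prodCongr
    (.refl _)).trans (nonempty_homeomorph_fin_succ_prod k).some⟩

theorem _root_.IsClopen.nonempty_homeomorph_cantor {A : Set Cantor} (hA : IsClopen A)
    (hne : A.Nonempty) : Nonempty (A ≃ₜ Cantor) := by
  obtain ⟨N, hN⟩ := exists_eqOn_Iio_imp_eq ((continuous_boolIndicator_iff_isClopen A).2 hA)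
  set S := (fun x : Cantor => (splitAt N x).1) '' A
  have hAS : A = splitAt N ⁻¹' (S ×ˢ univ) := by
    refine ext fun x => ⟨fun hx => ⟨mem_image_of_mem _ hx, trivial⟩, ?_⟩
    rintro ⟨⟨y, hy, hyx⟩, -⟩
    simp only [splitAt_fst] at hyx
    have := hN y x fun j hj => congrFun hyx ⟨j, hj⟩
    rwa [mem_iff_boolIndicator, ← this, ← mem_iff_boolIndicator]
  have : Nonempty S := (hne.image _).to_subtype
  exact ⟨((splitAt N).sets hAS).trans <| (Homeomorph.Set.prod S univ).trans <|
    ((Homeomorph.refl S).prodCongr (Homeomorph.Set.univ Cantor)).trans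
      (nonempty_homeomorph_prod S).some⟩

theorem exists_homeomorph_comp_eq {L : Type*} [TopologicalSpace L] [DiscreteTopology L]
    {α β : Cantor → L} (hα : Continuous α) (hβ : Continuous β) (hrange : range α = range β) :
    ∃ g : Cantor ≃ₜ Cantor, β ∘ g = α := by
  have fiber (q : L) : Nonempty ({x // α x = q} ≃ₜ {x // β x = q}) := by
    have hclopen {γ : Cantor → L} (hγ : Continuous γ) : IsClopen (γ ⁻¹' {q}) :=
      (isClopen_discrete {q}).preimage hγ
    by_cases hq : q ∈ range α
    · obtain ⟨x, hx⟩ := hq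
      obtain ⟨y, hy⟩ := hrange ▸ mem_range_self (f := α) x
      exact ⟨((hclopen hα).nonempty_homeomorph_cantor ⟨x, hx⟩).some.trans
        ((hclopen hβ).nonempty_homeomorph_cantor ⟨y, hy.trans hx⟩).some.symm⟩
    · have : IsEmpty {x // α x = q} := ⟨fun x => hq ⟨x, x.2⟩⟩
      have : IsEmpty {x // β x = q} := ⟨fun x => hq (hrange ▸ ⟨x, x.2⟩)⟩
      exact ⟨.empty⟩
  refine ⟨(Homeomorph.sigmaFiber hα).symm.trans
    ((Homeomorph.sigmaCongrRight fun q => (fiber q).some).trans (.sigmaFiber hβ)), ?_⟩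
  funext x
  exact ((fiber (α x)).some ⟨x, rfl⟩).2

variable {ι : Type*}

def label (u : ι → H) (n : ℕ) (z : Cantor) : (Fin n → Bool) × (ι → Fin n → Bool) :=
  (fun j => z j, fun i j => u i z j)

def pattern (u : ι → H) (n : ℕ) : Set ((Fin n → Bool) × (ι → Fin n → Bool)) :=
  range (label u n)

theorem continuous_label (u : ι → H) (n : ℕ) : Continuous (label u n) :=
  (continuous_pi fun _ => continuous_apply _).prodMk
    (continuous_pi fun i => continuous_pi fun _ => (continuous_apply _).comp (u i).continuous)

theorem exists_seq_pattern_eq [Finite ι] :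
    ∃ W : ℕ → ι → H, ∀ (u : ι → H) (n : ℕ), ∃ k, pattern (W k) n = pattern u n := by
  have hcount : (⋃ n, range (Function.invFun fun u : ι → H => pattern u n)).Countable :=
    countable_iUnion fun n => countable_range _
  obtain ⟨W, hW⟩ := hcount.exists_eq_range ⟨_, mem_iUnion.2 ⟨0, mem_range_self ∅⟩⟩
  refine ⟨W, fun u n => ?_⟩
  obtain ⟨k, hk⟩ : Function.invFun (fun u : ι → H => pattern u n) (pattern u n) ∈ range W :=
    hW ▸ mem_iUnion.2 ⟨n, mem_range_self _⟩
  exact ⟨k, hk ▸ Function.invFun_eq (f := fun u : ι → H => pattern u n) ⟨u, rfl⟩⟩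

theorem exists_conj_eqOn_Iio_of_semiconj [Finite ι] {f u v : ι → H} {n : ℕ}
    {ρ : Cantor → Cantor} (hρ : Continuous ρ) (hρs : Function.Surjective ρ)
    (hf : ∀ i y, ρ (f i y) = v i (ρ y)) (hp : pattern v n = pattern u n) :
    ∃ g : H, ∀ i z, EqOn (u i z) ((g * f i * g⁻¹) z) (Iio n) := by
  have hrange : range (label v n ∘ ρ) = range (label u n) := by
    rwa [range_comp, hρs.range_eq, image_univ]
  obtain ⟨g, hg⟩ := exists_homeomorph_comp_eq ((continuous_label v n).comp hρ)
    (continuous_label u n) hrange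
  have hg' (y : Cantor) : label u n (g y) = label v n (ρ y) := congrFun hg y
  refine ⟨g, fun i z j hj => ?_⟩
  obtain ⟨y, rfl⟩ := g.surjective z
  calc u i (g y) j = (label u n (g y)).2 i ⟨j, hj⟩ := rfl
    _ = (label v n (ρ (f i y))).1 ⟨j, hj⟩ := by rw [hg', hf]; rfl
    _ = (label u n (g (f i y))).1 ⟨j, hj⟩ := by rw [hg']
    _ = (g * f i * g⁻¹) (g y) j := by simp [label]

def seqProd (W : ℕ → ι → H) (i : ι) : H :=
  cantorSpaceHomeomorphNatToCantorSpace.trans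
    ((Homeomorph.piCongrRight fun k => W k i).trans cantorSpaceHomeomorphNatToCantorSpace.symm)

theorem seqProd_apply (W : ℕ → ι → H) (i : ι) (y : Cantor) (k : ℕ) :
    cantorSpaceHomeomorphNatToCantorSpace (seqProd W i y) k =
      W k i (cantorSpaceHomeomorphNatToCantorSpace y k) := by
  simp [seqProd]

end Cantor

theorem dense_diagonal_conjugacy_orbit_general (m : ℕ) :
    ∃ f : Fin m → H,
      Dense {x : Fin m → H | ∃ g : H, ∀ i, x i = g * f i * g⁻¹} := by
  obtain ⟨W, hW⟩ := Cantor.exists_seq_pattern_eq (ι := Fin m)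
  refine ⟨Cantor.seqProd W, dense_of_forall_eqOn_Iio fun u n => ?_⟩
  obtain ⟨k, hk⟩ := hW u n
  set e := cantorSpaceHomeomorphNatToCantorSpace
  obtain ⟨g, hg⟩ := Cantor.exists_conj_eqOn_Iio_of_semiconj (ρ := fun y => e y k)
    ((continuous_apply k).comp e.continuous) ((Function.surjective_eval k).comp e.surjective)
    (fun i y => Cantor.seqProd_apply W i y k) hk
  exact ⟨_, ⟨g, fun i => rfl⟩, hg⟩

/-- For every `m ≥ 1` there is a tuple in `H(2^ℕ)^m` whose diagonal conjugacy
orbit is dense in `H(2^ℕ)^m`. -/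
theorem dense_diagonal_conjugacy_orbit (m : ℕ) (hm : 0 < m) :
    ∃ f : Fin m → H,
      Dense {x : Fin m → H | ∃ g : H, ∀ i, x i = g * f i * g⁻¹} :=
  dense_diagonal_conjugacy_orbit_general m
end
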